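/- arXiv:1709.02258 — 3 statements merged into one kernel-verified Lean document; each statement's English description precedes it below -/
import Mathlib

section
/- Electrostatic reduction of the fully dynamic Euler–Bernoulli piezoelectric beam. Let L, h, ρ, α11, β3 > 0, γ3 ∈ ℝ, α1 = α11 + γ3²β3, and let v, w, p be smooth on [0,L] × [0,T]. Write s = v_x + ½w_x². Suppose that for each t: (i) ρh·v̈ − α1h·s_x + γ3β3h·p_xx = 0 on (0,L); (ii) the electrostatic charge relation −β3h·p_xx + γ3β3h·s_x = 0 on (0,L); (iii) ρh·ẅ − (ρh³/12)·ẅ_xx + (α1h³/12)·w_xxxx + ( (−α1h·s + γ3β3h·p_x)·w_x )_x = 0 on (0,L); (iv) the boundary conditions β3h·p_x(L,t) − γ3β3h·s(L,t) = −V(t) and α1h·s(L,t) − γ3β3h·p_x(L,t) = 0 (i.e., g¹ ≡ 0). Then (v, w) satisfies the electrostatic system: ρh·v̈ − α11h·s_x = 0 and ρh·ẅ − (ρh³/12)·ẅ_xx + (α1h³/12)·w_xxxx − ( (α11h·s + γ3·V(t))·w_x )_x = 0 on (0,L), together with the boundary condition α11h·s(L,t) = −γ3·V(t). -/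
/-- Partial derivative in the first (spatial) variable. -/
noncomputable def pdx (f : ℝ → ℝ → ℝ) : ℝ → ℝ → ℝ :=
  fun x t => deriv (fun y => f y t) x

/-- Partial derivative in the second (time) variable. -/
noncomputable def pdt (f : ℝ → ℝ → ℝ) : ℝ → ℝ → ℝ :=
  fun x t => deriv (fun τ => f x τ) t

/-- Electrostatic reduction of the fully dynamic Euler–Bernoulli piezoelectric
beam: discarding the magnetic effects (`μp̈ ≡ 0`), the fully dynamic system
with voltage boundary conditions reduces to the electrostatic system, in which
the voltage enters both the stretching boundary condition and the bending
equation. Here `s = v_x + ½w_x²` is the membrane strain. -/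
theorem electrostatic_reduction_EB
    (L T h ρ α11 β3 γ3 α1 : ℝ)
    (hL : 0 < L) (hT : 0 < T) (hh : 0 < h) (hρ : 0 < ρ)
    (hα11 : 0 < α11) (hβ3 : 0 < β3)
    (hα1 : α1 = α11 + γ3 ^ 2 * β3)
    (v w p s : ℝ → ℝ → ℝ) (V : ℝ → ℝ)
    (hv : ContDiff ℝ (⊤ : ℕ∞) (Function.uncurry v))
    (hw : ContDiff ℝ (⊤ : ℕ∞) (Function.uncurry w))
    (hp : ContDiff ℝ (⊤ : ℕ∞) (Function.uncurry p))
    (hs : ∀ x t, s x t = pdx v x t + (pdx w x t) ^ 2 / 2)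
    (heq1 : ∀ t ∈ Set.Icc (0:ℝ) T, ∀ x ∈ Set.Ioo (0:ℝ) L,
      ρ * h * pdt (pdt v) x t - α1 * h * pdx s x t
        + γ3 * β3 * h * pdx (pdx p) x t = 0)
    (heq2 : ∀ t ∈ Set.Icc (0:ℝ) T, ∀ x ∈ Set.Ioo (0:ℝ) L,
      -(β3 * h * pdx (pdx p) x t) + γ3 * β3 * h * pdx s x t = 0)
    (heq3 : ∀ t ∈ Set.Icc (0:ℝ) T, ∀ x ∈ Set.Ioo (0:ℝ) L,
      ρ * h * pdt (pdt w) x t - (ρ * h ^ 3 / 12) * pdx (pdx (pdt (pdt w))) x t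
        + (α1 * h ^ 3 / 12) * pdx (pdx (pdx (pdx w))) x t
        + pdx (fun y τ => (-(α1 * h) * s y τ + γ3 * β3 * h * pdx p y τ)
            * pdx w y τ) x t = 0)
    (hbc1 : ∀ t ∈ Set.Icc (0:ℝ) T,
      β3 * h * pdx p L t - γ3 * β3 * h * s L t = -V t)
    (hbc2 : ∀ t ∈ Set.Icc (0:ℝ) T,
      α1 * h * s L t - γ3 * β3 * h * pdx p L t = 0) :
    (∀ t ∈ Set.Icc (0:ℝ) T, ∀ x ∈ Set.Ioo (0:ℝ) L,
      ρ * h * pdt (pdt v) x t - α11 * h * pdx s x t = 0) ∧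
    (∀ t ∈ Set.Icc (0:ℝ) T, ∀ x ∈ Set.Ioo (0:ℝ) L,
      ρ * h * pdt (pdt w) x t - (ρ * h ^ 3 / 12) * pdx (pdx (pdt (pdt w))) x t
        + (α1 * h ^ 3 / 12) * pdx (pdx (pdx (pdx w))) x t
        - pdx (fun y τ => (α11 * h * s y τ + γ3 * V τ) * pdx w y τ) x t = 0) ∧
    (∀ t ∈ Set.Icc (0:ℝ) T, α11 * h * s L t = -(γ3 * V t)) := by
  -- slice smoothness
  have hv1 : ∀ t, ContDiff ℝ (⊤ : ℕ∞) (fun y => v y t) := fun t =>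
    hv.comp (ContDiff.prodMk contDiff_id contDiff_const)
  have hw1 : ∀ t, ContDiff ℝ (⊤ : ℕ∞) (fun y => w y t) := fun t =>
    hw.comp (ContDiff.prodMk contDiff_id contDiff_const)
  have hp1 : ∀ t, ContDiff ℝ (⊤ : ℕ∞) (fun y => p y t) := fun t =>
    hp.comp (ContDiff.prodMk contDiff_id contDiff_const)
  have hvx : ∀ t, ContDiff ℝ ((⊤ : ℕ∞) : WithTop ℕ∞) (fun y => pdx v y t) := fun t =>
    (contDiff_infty_iff_deriv.mp ((hv1 t).of_le (by simp))).2
  have hwx : ∀ t, ContDiff ℝ ((⊤ : ℕ∞) : WithTop ℕ∞) (fun y => pdx w y t) := fun t =>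
    (contDiff_infty_iff_deriv.mp ((hw1 t).of_le (by simp))).2
  have hpx : ∀ t, ContDiff ℝ ((⊤ : ℕ∞) : WithTop ℕ∞) (fun y => pdx p y t) := fun t =>
    (contDiff_infty_iff_deriv.mp ((hp1 t).of_le (by simp))).2
  have hsx : ∀ t, ContDiff ℝ ((⊤ : ℕ∞) : WithTop ℕ∞) (fun y => s y t) := by
    intro t
    have hfe : (fun y => s y t) = fun y => pdx v y t + (pdx w y t) ^ 2 / 2 :=
      funext fun y => hs y t
    rw [hfe]
    exact (hvx t).add (((hwx t).pow 2).div_const 2)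
  -- key: the boundary identity propagates into the interior
  have key : ∀ t ∈ Set.Icc (0:ℝ) T, ∀ x ∈ Set.Ioc (0:ℝ) L,
      γ3 * β3 * h * s x t - β3 * h * pdx p x t - V t = 0 := by
    intro t ht x hx
    set g : ℝ → ℝ := fun y => γ3 * β3 * h * s y t - β3 * h * pdx p y t with hg
    have hgsm : ContDiff ℝ ((⊤ : ℕ∞) : WithTop ℕ∞) g :=
      (contDiff_const.mul (hsx t)).sub (contDiff_const.mul (hpx t))
    have hderiv : ∀ y ∈ Set.Ioo (0:ℝ) L, deriv g y = 0 := by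
      intro y hy
      have h1 : DifferentiableAt ℝ (fun z => s z t) y :=
        ((hsx t).differentiable (by simp)) y
      have h2 : DifferentiableAt ℝ (fun z => pdx p z t) y :=
        ((hpx t).differentiable (by simp)) y
      have hdg : deriv g y
          = γ3 * β3 * h * pdx s y t - β3 * h * pdx (pdx p) y t := by
        rw [hg]
        rw [deriv_fun_sub (h1.const_mul _) (h2.const_mul _),
          deriv_const_mul _ h1, deriv_const_mul _ h2]
        rfl
      have he2 := heq2 t ht y hy
      rw [hdg]; linarith
    have hconst : ∀ y ∈ Set.Icc x L, g y = g x := by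
      refine constant_of_has_deriv_right_zero (hgsm.continuous.continuousOn) ?_
      intro y hy
      have hy' : y ∈ Set.Ioo (0:ℝ) L := ⟨lt_of_lt_of_le hx.1 hy.1, hy.2⟩
      have hd := ((hgsm.differentiable (by simp)) y).hasDerivAt
      rw [hderiv y hy'] at hd
      exact hd.hasDerivWithinAt
    have hgLeq : g L = g x := hconst L ⟨hx.2, le_refl L⟩
    have hb := hbc1 t ht
    have hgx : g x = γ3 * β3 * h * s x t - β3 * h * pdx p x t := rfl
    have hgL : g L = γ3 * β3 * h * s L t - β3 * h * pdx p L t := rfl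
    rw [← hgx, ← hgLeq, hgL]; linarith
  subst hα1
  refine ⟨?_, ?_, ?_⟩
  · intro t ht x hx
    have e1 := heq1 t ht x hx
    have e2 := heq2 t ht x hx
    linear_combination e1 + γ3 * e2
  · intro t ht x hx
    have e3 := heq3 t ht x hx
    have heqfun : (fun y => (α11 * h * s y t + γ3 * V t) * pdx w y t)
        =ᶠ[nhds x] (fun y =>
          -((-((α11 + γ3 ^ 2 * β3) * h) * s y t + γ3 * β3 * h * pdx p y t)
            * pdx w y t)) := by
      filter_upwards [Ioo_mem_nhds hx.1 hx.2] with y hy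
      have hk := key t ht y ⟨hy.1, le_of_lt hy.2⟩
      linear_combination (-γ3 * pdx w y t) * hk
    have hdeq : pdx (fun y τ => (α11 * h * s y τ + γ3 * V τ) * pdx w y τ) x t
        = - pdx (fun y τ => (-((α11 + γ3 ^ 2 * β3) * h) * s y τ
            + γ3 * β3 * h * pdx p y τ) * pdx w y τ) x t := by
      show deriv (fun y => (α11 * h * s y t + γ3 * V t) * pdx w y t) x
        = - deriv (fun y => (-((α11 + γ3 ^ 2 * β3) * h) * s y t
            + γ3 * β3 * h * pdx p y t) * pdx w y t) x
      rw [heqfun.deriv_eq, deriv.fun_neg]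
    rw [hdeq]
    linear_combination e3
  · intro t ht
    have hb1 := hbc1 t ht
    have hb2 := hbc2 t ht
    linear_combination γ3 * hb1 + hb2
end

section
/- Electrostatic reduction of the fully dynamic Mindlin–Timoshenko piezoelectric beam. Let L, h, ρ, α11, α3, β3 > 0, γ3 ∈ ℝ, α1 = α11 + γ3²β3, and let v, w, ψ, p be smooth on [0,L] × [0,T]. Write s = v_x + ½w_x². Suppose that for each t: (i) ρh·v̈ − α1h·s_x + γ3β3h·p_xx = 0 on (0,L); (ii) (ρh³/12)·ψ̈ − (α1h³/12)·ψ_xx + α3h·(w_x + ψ) = 0 on (0,L); (iii) ρh·ẅ − α1h·(s·w_x)_x + γ3β3h·(w_x p_x)_x − α3h·(w_x + ψ)_x = 0 on (0,L); (iv) the electrostatic charge relation −β3h·p_xx + γ3β3h·s_x = 0 on (0,L); (v) the boundary conditions β3h·p_x(L,t) − γ3β3h·s(L,t) = −V(t) and α1h·s(L,t) − γ3β3h·p_x(L,t) = 0. Then (v, w, ψ) satisfies: ρh·v̈ − α11h·s_x = 0, (ρh³/12)·ψ̈ − (α1h³/12)·ψ_xx + α3h·(w_x + ψ) = 0, and ρh·ẅ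 − α3h·(w_x + ψ)_x − ( α11h·s·w_x + γ3·V(t)·w_x )_x = 0 on (0,L), together with the boundary condition α11h·s(L,t) = −γ3·V(t). -/
/-- Electrostatic reduction of the fully dynamic Mindlin–Timoshenko
piezoelectric beam: discarding the magnetic effects (`μp̈ ≡ 0`), the fully
dynamic system with voltage boundary conditions reduces to the electrostatic
system. Here `s = v_x + ½w_x²` is the membrane strain and `ψ` the rotation
angle. -/
theorem electrostatic_reduction_MT
    (L T h ρ α11 α3 β3 γ3 α1 : ℝ)
    (hL : 0 < L) (hT : 0 < T) (hh : 0 < h) (hρ : 0 < ρ)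
    (hα11 : 0 < α11) (hα3 : 0 < α3) (hβ3 : 0 < β3)
    (hα1 : α1 = α11 + γ3 ^ 2 * β3)
    (v w ψ p s : ℝ → ℝ → ℝ) (V : ℝ → ℝ)
    (hv : ContDiff ℝ (⊤ : ℕ∞) (Function.uncurry v))
    (hw : ContDiff ℝ (⊤ : ℕ∞) (Function.uncurry w))
    (hψ : ContDiff ℝ (⊤ : ℕ∞) (Function.uncurry ψ))
    (hp : ContDiff ℝ (⊤ : ℕ∞) (Function.uncurry p))
    (hs : ∀ x t, s x t = pdx v x t + (pdx w x t) ^ 2 / 2)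
    (heq1 : ∀ t ∈ Set.Icc (0:ℝ) T, ∀ x ∈ Set.Ioo (0:ℝ) L,
      ρ * h * pdt (pdt v) x t - α1 * h * pdx s x t
        + γ3 * β3 * h * pdx (pdx p) x t = 0)
    (heq2 : ∀ t ∈ Set.Icc (0:ℝ) T, ∀ x ∈ Set.Ioo (0:ℝ) L,
      (ρ * h ^ 3 / 12) * pdt (pdt ψ) x t - (α1 * h ^ 3 / 12) * pdx (pdx ψ) x t
        + α3 * h * (pdx w x t + ψ x t) = 0)
    (heq3 : ∀ t ∈ Set.Icc (0:ℝ) T, ∀ x ∈ Set.Ioo (0:ℝ) L,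
      ρ * h * pdt (pdt w) x t
        - α1 * h * pdx (fun y τ => s y τ * pdx w y τ) x t
        + γ3 * β3 * h * pdx (fun y τ => pdx w y τ * pdx p y τ) x t
        - α3 * h * pdx (fun y τ => pdx w y τ + ψ y τ) x t = 0)
    (heq4 : ∀ t ∈ Set.Icc (0:ℝ) T, ∀ x ∈ Set.Ioo (0:ℝ) L,
      -(β3 * h * pdx (pdx p) x t) + γ3 * β3 * h * pdx s x t = 0)
    (hbc1 : ∀ t ∈ Set.Icc (0:ℝ) T,
      β3 * h * pdx p L t - γ3 * β3 * h * s L t = -V t)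
    (hbc2 : ∀ t ∈ Set.Icc (0:ℝ) T,
      α1 * h * s L t - γ3 * β3 * h * pdx p L t = 0) :
    (∀ t ∈ Set.Icc (0:ℝ) T, ∀ x ∈ Set.Ioo (0:ℝ) L,
      ρ * h * pdt (pdt v) x t - α11 * h * pdx s x t = 0) ∧
    (∀ t ∈ Set.Icc (0:ℝ) T, ∀ x ∈ Set.Ioo (0:ℝ) L,
      (ρ * h ^ 3 / 12) * pdt (pdt ψ) x t - (α1 * h ^ 3 / 12) * pdx (pdx ψ) x t
        + α3 * h * (pdx w x t + ψ x t) = 0) ∧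
    (∀ t ∈ Set.Icc (0:ℝ) T, ∀ x ∈ Set.Ioo (0:ℝ) L,
      ρ * h * pdt (pdt w) x t
        - α3 * h * pdx (fun y τ => pdx w y τ + ψ y τ) x t
        - pdx (fun y τ => α11 * h * s y τ * pdx w y τ + γ3 * V τ * pdx w y τ)
            x t = 0) ∧
    (∀ t ∈ Set.Icc (0:ℝ) T, α11 * h * s L t = -(γ3 * V t)) := by
  have hbh : (β3 * h) ≠ 0 := by positivity
  have slice : ∀ (f : ℝ → ℝ → ℝ), ContDiff ℝ (⊤ : ℕ∞) (Function.uncurry f) →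
      ∀ t : ℝ, ContDiff ℝ (⊤ : ℕ∞) (fun y => f y t) := fun f hf t =>
    hf.comp (ContDiff.prodMk contDiff_id contDiff_const)
  have hone : ((⊤ : ℕ∞) : WithTop ℕ∞) ≠ 0 := by simp
  have dsm : ∀ f : ℝ → ℝ, ContDiff ℝ (⊤ : ℕ∞) f → ContDiff ℝ (⊤ : ℕ∞) (deriv f) :=
    fun f hf => (contDiff_infty_iff_deriv.mp (hf.of_le (by simp))).2
  have hsf : ∀ t : ℝ, ContDiff ℝ (⊤ : ℕ∞) (fun y => s y t) := by
    intro t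
    have he : (fun y => s y t)
        = fun y => deriv (fun z => v z t) y + (deriv (fun z => w z t) y) ^ 2 / 2 := by
      funext y; rw [hs]; rfl
    rw [he]
    exact (dsm _ (slice v hv t)).add (((dsm _ (slice w hw t)).pow 2).div_const 2)
  have hpxc : ∀ t : ℝ, ContDiff ℝ (⊤ : ℕ∞) (deriv (fun y => p y t)) :=
    fun t => dsm _ (slice p hp t)
  have hwxc : ∀ t : ℝ, ContDiff ℝ (⊤ : ℕ∞) (deriv (fun y => w y t)) :=
    fun t => dsm _ (slice w hw t)
  have key : ∀ t ∈ Set.Icc (0:ℝ) T, ∀ x ∈ Set.Ioo (0:ℝ) L,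
      pdx p x t - γ3 * s x t = pdx p L t - γ3 * s L t := by
    intro t ht x hx
    have hqc : ContDiff ℝ (⊤ : ℕ∞) (fun y => deriv (fun z => p z t) y - γ3 * s y t) :=
      (hpxc t).sub (contDiff_const.mul (hsf t))
    obtain ⟨c, hc, hdc⟩ := exists_deriv_eq_slope
      (fun y => deriv (fun z => p z t) y - γ3 * s y t) hx.2
      (hqc.continuous.continuousOn)
      ((hqc.differentiable hone).differentiableOn)
    have hcI : c ∈ Set.Ioo (0:ℝ) L := ⟨lt_trans hx.1 hc.1, hc.2⟩
    have h4 := heq4 t ht c hcI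
    have hds : DifferentiableAt ℝ (fun y => s y t) c :=
      ((hsf t).differentiable hone).differentiableAt
    have hdp : DifferentiableAt ℝ (deriv (fun z => p z t)) c :=
      ((hpxc t).differentiable hone).differentiableAt
    have hval : deriv (fun y => deriv (fun z => p z t) y - γ3 * s y t) c
        = pdx (pdx p) c t - γ3 * pdx s c t := by
      rw [deriv_fun_sub hdp (hds.const_mul γ3), deriv_const_mul γ3 hds]
      rfl
    have hmul : β3 * h * (pdx (pdx p) c t - γ3 * pdx s c t) = 0 := by
      linear_combination -h4
    have hzero : deriv (fun y => deriv (fun z => p z t) y - γ3 * s y t) c = 0 := by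
      rw [hval]
      exact (mul_eq_zero.mp hmul).resolve_left hbh
    rw [hzero] at hdc
    have hLx : L - x ≠ 0 := sub_ne_zero.mpr (ne_of_gt hx.2)
    have hfin : (deriv (fun z => p z t) L - γ3 * s L t)
        - (deriv (fun z => p z t) x - γ3 * s x t) = 0 := by
      field_simp at hdc
      linarith
    show deriv (fun z => p z t) x - γ3 * s x t
        = deriv (fun z => p z t) L - γ3 * s L t
    linarith
  refine ⟨?_, heq2, ?_, ?_⟩
  · intro t ht x hx
    have h1 := heq1 t ht x hx
    have h4 := heq4 t ht x hx
    rw [hα1] at h1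
    linear_combination h1 + γ3 * h4
  · intro t ht x hx
    have h3 := heq3 t ht x hx
    set c : ℝ := pdx p L t - γ3 * s L t with hcdef
    have hcval : β3 * h * c = -V t := by
      have hb := hbc1 t ht
      rw [hcdef]
      linear_combination hb
    have hev : (fun y => pdx w y t * pdx p y t)
        =ᶠ[nhds x] (fun y => deriv (fun z => w z t) y * (γ3 * s y t + c)) := by
      filter_upwards [isOpen_Ioo.mem_nhds hx] with y hy
      have hk := key t ht y hy
      show pdx w y t * pdx p y t = deriv (fun z => w z t) y * (γ3 * s y t + c)
      have hpy : pdx p y t = γ3 * s y t + c := by rw [hcdef]; linarith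
      rw [hpy]
      rfl
    have hdw : DifferentiableAt ℝ (deriv (fun z => w z t)) x :=
      ((hwxc t).differentiable hone).differentiableAt
    have hds : DifferentiableAt ℝ (fun y => s y t) x :=
      ((hsf t).differentiable hone).differentiableAt
    have hw' : HasDerivAt (deriv (fun z => w z t))
        (deriv (deriv (fun z => w z t)) x) x := hdw.hasDerivAt
    have hs' : HasDerivAt (fun y => s y t) (deriv (fun y => s y t) x) x :=
      hds.hasDerivAt
    have hM : pdx (fun y τ => pdx w y τ * pdx p y τ) x t
        = deriv (deriv (fun z => w z t)) x * (γ3 * s x t + c)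
          + deriv (fun z => w z t) x * (γ3 * deriv (fun y => s y t) x) := by
      have h1 : pdx (fun y τ => pdx w y τ * pdx p y τ) x t
          = deriv (fun y => deriv (fun z => w z t) y * (γ3 * s y t + c)) x :=
        hev.deriv_eq
      rw [h1]
      exact (hw'.mul ((hs'.const_mul γ3).add_const c)).deriv
    have hA : pdx (fun y τ => s y τ * pdx w y τ) x t
        = deriv (fun y => s y t) x * deriv (fun z => w z t) x
          + s x t * deriv (deriv (fun z => w z t)) x :=
      (hs'.mul hw').deriv
    have hD : pdx (fun y τ => α11 * h * s y τ * pdx w y τ + γ3 * V τ * pdx w y τ) x t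
        = α11 * h * deriv (fun y => s y t) x * deriv (fun z => w z t) x
          + α11 * h * s x t * deriv (deriv (fun z => w z t)) x
          + γ3 * V t * deriv (deriv (fun z => w z t)) x := by
      have hder := (((hs'.const_mul (α11 * h)).mul hw').add
        (hw'.const_mul (γ3 * V t))).deriv
      show deriv (fun y => α11 * h * s y t * pdx w y t + γ3 * V t * pdx w y t) x = _
      exact hder
    rw [hM, hA, hα1] at h3
    rw [show pdx (fun y τ => α11 * h * s y τ * pdx w y τ + γ3 * V τ * pdx w y τ) x t
        = _ from hD]
    linear_combination h3 - γ3 * deriv (deriv (fun z => w z t)) x * hcval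
  · intro t ht
    have b1 := hbc1 t ht
    have b2 := hbc2 t ht
    rw [hα1] at b2
    linear_combination b2 + γ3 * b1
end

section
/- Hamilton's principle yields the fully dynamic nonlinear Euler–Bernoulli piezoelectric beam equations. Let L, h, ρ, β3, μ > 0, γ3 ∈ ℝ, α1 = α11 + γ3²β3, and let v, w, p be smooth on [0,L] × [0,T] with v(0,t) = w(0,t) = w_x(0,t) = p(0,t) = 0. Write s = v_x + ½w_x² and define the action A[v,w,p] = ∫₀ᵀ { (ρh/2)∫₀ᴸ(v̇² + (h²/12)ẇ_x² + ẇ²)dx − (h/2)∫₀ᴸ[ α1( s² + (h²/12)w_xx² ) − 2γ3β3·s·p_x + β3·p_x² ]dx + (μh/2)∫₀ᴸ ṗ² dx − V(t)·p(L,t) + g¹(t)·v(L,t) + g(t)·w(L,t) − m(t)·w_x(L,t) } dt. Suppose that for every smooth variation (φ, η, q) vanishing at t = 0 and t = T and satisfying φ(0,t) = η(0,t) = η_x(0,t) = q(0,t) = 0, the first variation (d/dε)A[v + εφ, w + εη, p + εq] |_{ε=0} = 0. Then (v, w, p) satisfies on (0,L): ρh·v̈ − α1h·s_x + γ3β3h·p_xx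 = 0; μh·p̈ − β3h·p_xx + γ3β3h·s_x = 0; ρh·ẅ − (ρh³/12)ẅ_xx + (α1h³/12)w_xxxx + ( (−α1h·s + γ3β3h·p_x)·w_x )_x = 0; together with the natural boundary conditions at x = L: (α1h³/12)w_xx = −m(t); α1h·s − γ3β3h·p_x = g¹(t); β3h·p_x − γ3β3h·s = −V(t); and (ρh³/12)ẅ_x − (α1h³/12)w_xxx + (α1h·s − γ3β3h·p_x)·w_x = g(t). -/
/-- The action functional of the fully dynamic nonlinear Euler–Bernoulli
piezoelectric beam: Kinetic − (Potential + Electrical) + Magnetic + Work. -/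
noncomputable def actionEB (L T h ρ α1 γ3 β3 μ : ℝ)
    (V g1 g m : ℝ → ℝ) (v w p : ℝ → ℝ → ℝ) : ℝ :=
  ∫ t in (0:ℝ)..T,
    ((ρ * h / 2) * (∫ x in (0:ℝ)..L,
        ((pdt v x t) ^ 2 + (h ^ 2 / 12) * (pdt (pdx w) x t) ^ 2
          + (pdt w x t) ^ 2))
    - (h / 2) * (∫ x in (0:ℝ)..L,
        (α1 * ((pdx v x t + (pdx w x t) ^ 2 / 2) ^ 2
            + (h ^ 2 / 12) * (pdx (pdx w) x t) ^ 2)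
          - 2 * γ3 * β3 * (pdx v x t + (pdx w x t) ^ 2 / 2) * pdx p x t
          + β3 * (pdx p x t) ^ 2))
    + (μ * h / 2) * (∫ x in (0:ℝ)..L, (pdt p x t) ^ 2)
    - V t * p L t + g1 t * v L t + g t * w L t - m t * pdx w L t)

open Function intervalIntegral MeasureTheory

section calculus
variable {f g : ℝ → ℝ → ℝ}

theorem hasDerivAt_slice_x (hf : ContDiff ℝ (⊤ : ℕ∞) (uncurry f)) (x t : ℝ) :
    HasDerivAt (fun y => f y t) (fderiv ℝ (uncurry f) (x, t) (1, 0)) x := by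
  have h1 : HasDerivAt (fun y : ℝ => (y, t)) ((1:ℝ), (0:ℝ)) x := by
    simpa using (hasDerivAt_id x).prodMk (hasDerivAt_const x t)
  have h2 : HasFDerivAt (uncurry f) (fderiv ℝ (uncurry f) (x, t)) (x, t) :=
    (hf.differentiable (by simp) (x, t)).hasFDerivAt
  exact h2.comp_hasDerivAt x h1

theorem hasDerivAt_slice_t (hf : ContDiff ℝ (⊤ : ℕ∞) (uncurry f)) (x t : ℝ) :
    HasDerivAt (fun τ => f x τ) (fderiv ℝ (uncurry f) (x, t) (0, 1)) t := by
  have h1 : HasDerivAt (fun τ : ℝ => (x, τ)) ((0:ℝ), (1:ℝ)) t := by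
    simpa using (hasDerivAt_const t x).prodMk (hasDerivAt_id t)
  have h2 : HasFDerivAt (uncurry f) (fderiv ℝ (uncurry f) (x, t)) (x, t) :=
    (hf.differentiable (by simp) (x, t)).hasFDerivAt
  exact h2.comp_hasDerivAt t h1

theorem pdx_eq (hf : ContDiff ℝ (⊤ : ℕ∞) (uncurry f)) (x t : ℝ) :
    pdx f x t = fderiv ℝ (uncurry f) (x, t) (1, 0) := (hasDerivAt_slice_x hf x t).deriv

theorem pdt_eq (hf : ContDiff ℝ (⊤ : ℕ∞) (uncurry f)) (x t : ℝ) :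
    pdt f x t = fderiv ℝ (uncurry f) (x, t) (0, 1) := (hasDerivAt_slice_t hf x t).deriv

theorem contDiff_pdx (hf : ContDiff ℝ (⊤ : ℕ∞) (uncurry f)) : ContDiff ℝ (⊤ : ℕ∞) (uncurry (pdx f)) := by
  have : uncurry (pdx f) = fun z : ℝ × ℝ => fderiv ℝ (uncurry f) z (1, 0) := by
    funext z
    exact pdx_eq hf z.1 z.2
  rw [this]
  exact (ContinuousLinearMap.apply ℝ ℝ ((1:ℝ), (0:ℝ))).contDiff.comp (hf.fderiv_right (by simp))

theorem contDiff_pdt (hf : ContDiff ℝ (⊤ : ℕ∞) (uncurry f)) : ContDiff ℝ (⊤ : ℕ∞) (uncurry (pdt f)) := by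
  have : uncurry (pdt f) = fun z : ℝ × ℝ => fderiv ℝ (uncurry f) z (0, 1) := by
    funext z
    exact pdt_eq hf z.1 z.2
  rw [this]
  exact (ContinuousLinearMap.apply ℝ ℝ ((0:ℝ), (1:ℝ))).contDiff.comp (hf.fderiv_right (by simp))

theorem pdx_pdt_comm (hf : ContDiff ℝ (⊤ : ℕ∞) (uncurry f)) : pdx (pdt f) = pdt (pdx f) := by
  funext x t
  have hsym : IsSymmSndFDerivAt ℝ (uncurry f) (x, t) :=
    (hf.contDiffAt).isSymmSndFDerivAt (by rw [minSmoothness_of_isRCLikeNormedField]; exact le_trans (le_of_eq (by norm_cast)) (WithTop.coe_le_coe.mpr (le_top : (2:ℕ∞) ≤ ⊤)))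
  have h1 : pdx (pdt f) x t = fderiv ℝ (fderiv ℝ (uncurry f)) (x, t) (1, 0) (0, 1) := by
    rw [pdx_eq (contDiff_pdt hf) x t]
    have : uncurry (pdt f) = fun z : ℝ × ℝ => fderiv ℝ (uncurry f) z ((0:ℝ), (1:ℝ)) := by
      funext z; exact pdt_eq hf z.1 z.2
    rw [this]
    rw [fderiv_clm_apply]
    · simp
    · exact ((hf.fderiv_right (m := (⊤ : ℕ∞)) (by simp)).differentiable (by simp)).differentiableAt
    · exact differentiableAt_const _
  have h2 : pdt (pdx f) x t = fderiv ℝ (fderiv ℝ (uncurry f)) (x, t) (0, 1) (1, 0) := by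
    rw [pdt_eq (contDiff_pdx hf) x t]
    have : uncurry (pdx f) = fun z : ℝ × ℝ => fderiv ℝ (uncurry f) z ((1:ℝ), (0:ℝ)) := by
      funext z; exact pdx_eq hf z.1 z.2
    rw [this]
    rw [fderiv_clm_apply]
    · simp
    · exact ((hf.fderiv_right (m := (⊤ : ℕ∞)) (by simp)).differentiable (by simp)).differentiableAt
    · exact differentiableAt_const _
  rw [h1, h2, hsym]

theorem hasDerivAt_pdx (hf : ContDiff ℝ (⊤ : ℕ∞) (uncurry f)) (x t : ℝ) :
    HasDerivAt (fun y => f y t) (pdx f x t) x := by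
  exact (hasDerivAt_slice_x hf x t).differentiableAt.hasDerivAt

theorem hasDerivAt_pdt (hf : ContDiff ℝ (⊤ : ℕ∞) (uncurry f)) (x t : ℝ) :
    HasDerivAt (fun τ => f x τ) (pdt f x t) t := by
  exact (hasDerivAt_slice_t hf x t).differentiableAt.hasDerivAt

theorem pdx_perturb (hf : ContDiff ℝ (⊤ : ℕ∞) (uncurry f)) (hg : ContDiff ℝ (⊤ : ℕ∞) (uncurry g)) (ε : ℝ) :
    pdx (fun x t => f x t + ε * g x t) = fun x t => pdx f x t + ε * pdx g x t := by
  funext x t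
  exact (((hasDerivAt_pdx hf x t).add ((hasDerivAt_pdx hg x t).const_mul ε)).deriv)

theorem pdt_perturb (hf : ContDiff ℝ (⊤ : ℕ∞) (uncurry f)) (hg : ContDiff ℝ (⊤ : ℕ∞) (uncurry g)) (ε : ℝ) :
    pdt (fun x t => f x t + ε * g x t) = fun x t => pdt f x t + ε * pdt g x t := by
  funext x t
  exact (((hasDerivAt_pdt hf x t).add ((hasDerivAt_pdt hg x t).const_mul ε)).deriv)

end calculus


theorem EB.split2 {a b ε : ℝ} {F0 F1 F2 : ℝ → ℝ}
    (h0 : IntervalIntegrable F0 volume a b) (h1 : IntervalIntegrable F1 volume a b)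
    (h2 : IntervalIntegrable F2 volume a b) :
    ∫ x in a..b, (F0 x + ε * F1 x + ε ^ 2 * F2 x)
      = (∫ x in a..b, F0 x) + ε * (∫ x in a..b, F1 x) + ε ^ 2 * (∫ x in a..b, F2 x) := by
  rw [integral_add (h0.add (h1.const_mul ε)) (h2.const_mul (ε ^ 2)),
    integral_add h0 (h1.const_mul ε), intervalIntegral.integral_const_mul, intervalIntegral.integral_const_mul]

theorem EB.split4 {a b ε : ℝ} {F0 F1 F2 F3 F4 : ℝ → ℝ}
    (h0 : IntervalIntegrable F0 volume a b) (h1 : IntervalIntegrable F1 volume a b)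
    (h2 : IntervalIntegrable F2 volume a b) (h3 : IntervalIntegrable F3 volume a b)
    (h4 : IntervalIntegrable F4 volume a b) :
    ∫ x in a..b, (F0 x + ε * F1 x + ε ^ 2 * F2 x + ε ^ 3 * F3 x + ε ^ 4 * F4 x)
      = (∫ x in a..b, F0 x) + ε * (∫ x in a..b, F1 x) + ε ^ 2 * (∫ x in a..b, F2 x)
        + ε ^ 3 * (∫ x in a..b, F3 x) + ε ^ 4 * (∫ x in a..b, F4 x) := by
  rw [integral_add (((h0.add (h1.const_mul ε)).add (h2.const_mul (ε ^ 2))).add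
      (h3.const_mul (ε ^ 3))) (h4.const_mul (ε ^ 4)),
    integral_add ((h0.add (h1.const_mul ε)).add (h2.const_mul (ε ^ 2))) (h3.const_mul (ε ^ 3)),
    integral_add (h0.add (h1.const_mul ε)) (h2.const_mul (ε ^ 2)),
    integral_add h0 (h1.const_mul ε), intervalIntegral.integral_const_mul, intervalIntegral.integral_const_mul,
    intervalIntegral.integral_const_mul, intervalIntegral.integral_const_mul]

theorem EB.derivPoly (C0 C1 C2 C3 C4 : ℝ) :
    HasDerivAt (fun ε : ℝ => C0 + ε * C1 + ε ^ 2 * C2 + ε ^ 3 * C3 + ε ^ 4 * C4) C1 0 := by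
  have h : HasDerivAt (fun ε : ℝ => C0 + ε * C1 + ε ^ 2 * C2 + ε ^ 3 * C3 + ε ^ 4 * C4)
      (C1 + (2 * 0 ^ 1) * C2 + (3 * 0 ^ 2) * C3 + (4 * 0 ^ 3) * C4) 0 := by
    exact ((((hasDerivAt_const 0 C0).add (((hasDerivAt_id 0).mul_const C1).congr_deriv
        (by ring))).add ((hasDerivAt_pow 2 0).mul_const C2)).add
        ((hasDerivAt_pow 3 0).mul_const C3)).add ((hasDerivAt_pow 4 0).mul_const C4) |>.congr_deriv
        (by push_cast; ring)
  simpa using h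

open Set
theorem EB.zero_on_Icc {c : ℝ} (hc : 0 < c) {f : ℝ → ℝ} (hf : Continuous f)
    (h : ∀ x ∈ Set.Ioo (0:ℝ) c, f x = 0) : ∀ x ∈ Set.Icc (0:ℝ) c, f x = 0 := by
  intro x hx
  have hsub : Set.Icc (0:ℝ) c ⊆ {y | f y = 0} := by
    rw [← closure_Ioo hc.ne]
    exact closure_minimal (fun y hy => h y hy) (isClosed_eq hf continuous_const)
  exact hsub hx

theorem EB.pos_integral {c : ℝ} (hc : 0 < c) {g : ℝ → ℝ} (hg : Continuous g)
    (hnn : ∀ s, 0 ≤ g s) {x0 : ℝ} (hx0 : x0 ∈ Set.Icc (0:ℝ) c) (hpos : 0 < g x0) :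
    0 < ∫ s in (0:ℝ)..c, g s := by
  obtain ⟨hx0l, hx0r⟩ := hx0
  have hU : IsOpen (g ⁻¹' Set.Ioi (g x0 / 2)) := isOpen_Ioi.preimage hg
  have hx0U : x0 ∈ g ⁻¹' Set.Ioi (g x0 / 2) := by simp; linarith
  obtain ⟨δ, hδ, hball⟩ := Metric.isOpen_iff.1 hU x0 hx0U
  set u : ℝ := max 0 (x0 - δ/2) with hu
  set v : ℝ := min c (x0 + δ/2) with hv
  have huv : u < v := by
    rcases le_or_gt x0 (δ/2) with hc1 | hc1
    · have : u = 0 ∨ u = x0 - δ/2 := max_choice _ _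
      rcases this with h1 | h1 <;> rw [h1] <;>
        [skip; skip] <;> (apply lt_min (by linarith) (by linarith))
    · have hu' : u = x0 - δ/2 := max_eq_right (by linarith)
      rw [hu']
      exact lt_min (by linarith) (by linarith)
  have h0u : 0 ≤ u := le_max_left _ _
  have hvc : v ≤ c := min_le_left _ _
  have hmid : ∀ s ∈ Set.Ioo u v, 0 < g s := by
    intro s hs
    have : s ∈ Metric.ball x0 δ := by
      simp only [Metric.mem_ball, Real.dist_eq, abs_lt]
      obtain ⟨h1, h2⟩ := hs
      have := le_max_right 0 (x0 - δ/2)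
      have := min_le_right c (x0 + δ/2)
      constructor <;> linarith
    have := hball this
    simp only [Set.mem_preimage, Set.mem_Ioi] at this
    linarith
  have hInt : ∀ A B : ℝ, IntervalIntegrable g volume A B := fun A B => hg.intervalIntegrable A B
  have hsplit1 : (∫ s in (0:ℝ)..u, g s) + ∫ s in u..v, g s = ∫ s in (0:ℝ)..v, g s :=
    integral_add_adjacent_intervals (μ := volume) (hInt 0 u) (hInt u v)
  have hsplit2 : (∫ s in (0:ℝ)..v, g s) + ∫ s in v..c, g s = ∫ s in (0:ℝ)..c, g s :=
    integral_add_adjacent_intervals (μ := volume) (hInt 0 v) (hInt v c)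
  have hp : 0 < ∫ s in u..v, g s := intervalIntegral_pos_of_pos_on (hInt u v) hmid huv
  have hnn1 : 0 ≤ ∫ s in (0:ℝ)..u, g s :=
    intervalIntegral.integral_nonneg h0u (fun s _ => hnn s)
  have hnn2 : 0 ≤ ∫ s in v..c, g s :=
    intervalIntegral.integral_nonneg hvc (fun s _ => hnn s)
  linarith

/-- A continuous function on `[0,c]` orthogonal to all monomials vanishes on `[0,c]`. -/
theorem EB.moment {c : ℝ} (hc : 0 < c) {f : ℝ → ℝ} (hf : Continuous f)
    (H : ∀ n : ℕ, ∫ t in (0:ℝ)..c, f t * t ^ n = 0) : ∀ t ∈ Set.Icc (0:ℝ) c, f t = 0 := by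
  -- orthogonal to all polynomials
  have Hp : ∀ p : Polynomial ℝ, ∫ t in (0:ℝ)..c, f t * p.eval t = 0 := by
    intro p
    induction p using Polynomial.induction_on' with
    | add p q hp hq =>
      have : ∀ t : ℝ, f t * (p + q).eval t = f t * p.eval t + f t * q.eval t := by
        intro t; simp [Polynomial.eval_add]; ring
      rw [intervalIntegral.integral_congr (g := fun t => f t * p.eval t + f t * q.eval t)
        (fun t _ => this t),
        intervalIntegral.integral_add (f := fun t => f t * p.eval t) (g := fun t => f t * q.eval t)
          ((hf.mul (Polynomial.continuous p)).intervalIntegrable 0 c)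
          ((hf.mul (Polynomial.continuous q)).intervalIntegrable 0 c), hp, hq, add_zero]
    | monomial n a =>
      have : ∀ t : ℝ, f t * ((Polynomial.monomial n) a).eval t = a * (f t * t ^ n) := by
        intro t; simp [Polynomial.eval_monomial]; ring
      rw [intervalIntegral.integral_congr (g := fun t => a * (f t * t ^ n)) (fun t _ => this t),
        intervalIntegral.integral_const_mul, H n, mul_zero]
  -- bound of |f| on the interval
  obtain ⟨M, hM⟩ := (isCompact_Icc (a := (0:ℝ)) (b := c)).exists_bound_of_continuousOn
    hf.continuousOn
  have hM0 : 0 ≤ M := le_trans (norm_nonneg _) (hM 0 ⟨le_refl 0, hc.le⟩)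
  -- ∫ f^2 = 0
  have hsq : ∫ t in (0:ℝ)..c, f t ^ 2 = 0 := by
    by_contra hne
    have hpos : 0 < ∫ t in (0:ℝ)..c, f t ^ 2 := by
      rcases (intervalIntegral.integral_nonneg hc.le
        (fun u _ => sq_nonneg (f u))).lt_or_eq with h | h
      · exact h
      · exact absurd h.symm hne
    set I : ℝ := ∫ t in (0:ℝ)..c, f t ^ 2 with hI
    set ε : ℝ := I / ((M + 1) * c) / 2 with hε
    have hεpos : 0 < ε := by
      apply div_pos (div_pos hpos (by positivity)) (by norm_num)
    obtain ⟨p, hpns⟩ := exists_polynomial_near_of_continuousOn 0 c f hf.continuousOn ε hεpos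
    have key : |∫ t in (0:ℝ)..c, f t * (f t - p.eval t)| ≤ M * ε * c := by
      have := intervalIntegral.norm_integral_le_of_norm_le_const
        (C := M * ε) (f := fun t => f t * (f t - p.eval t)) (a := 0) (b := c) ?_
      · simpa [abs_of_pos hc] using this
      · intro t ht
        rw [Set.uIoc_of_le hc.le] at ht
        have ht' : t ∈ Set.Icc (0:ℝ) c := ⟨ht.1.le, ht.2⟩
        have h1 : |f t| ≤ M := by simpa [Real.norm_eq_abs] using hM t ht'
        have h2 : |f t - p.eval t| ≤ ε := by
          have := hpns t ht'
          rw [abs_sub_comm] at this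
          linarith [this]
        calc ‖f t * (f t - p.eval t)‖ = |f t| * |f t - p.eval t| := by
              rw [Real.norm_eq_abs, abs_mul]
          _ ≤ M * ε := mul_le_mul h1 h2 (abs_nonneg _) hM0
    have hdiff : ∫ t in (0:ℝ)..c, f t * (f t - p.eval t) = I := by
      have : ∀ t : ℝ, f t * (f t - p.eval t) = f t ^ 2 - f t * p.eval t := fun t => by ring
      rw [intervalIntegral.integral_congr (g := fun t => f t ^ 2 - f t * p.eval t)
        (fun t _ => this t),
        intervalIntegral.integral_sub (f := fun t => f t ^ 2) (g := fun t => f t * p.eval t)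
          ((hf.pow 2).intervalIntegrable 0 c)
          ((hf.mul (Polynomial.continuous p)).intervalIntegrable 0 c), Hp p, sub_zero]
    rw [hdiff] at key
    have hIabs : |I| = I := abs_of_pos hpos
    rw [hIabs] at key
    have hεc : M * ε * c ≤ I / 2 := by
      have hc' : c ≠ 0 := hc.ne'
      have hM1 : (M + 1) ≠ 0 := by linarith
      have h1 : M * ε * c = (M / (M + 1)) * (I / 2) := by
        rw [hε]; field_simp
      have h2 : M / (M + 1) ≤ 1 := by
        rw [div_le_one (by linarith)]; linarith
      have h3 : 0 ≤ I / 2 := by linarith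
      rw [h1]
      nlinarith
    linarith
  -- conclude pointwise
  intro t ht
  by_contra hne
  have : 0 < ∫ s in (0:ℝ)..c, f s ^ 2 :=
    EB.pos_integral hc (hf.pow 2) (fun s => sq_nonneg _) ht (by positivity)
  rw [hsq] at this
  exact lt_irrefl 0 this

theorem EB.flcvT {T : ℝ} (hT : 0 < T) {f : ℝ → ℝ} (hf : Continuous f)
    (H : ∀ b : ℝ → ℝ, ContDiff ℝ (⊤ : ℕ∞) b → b 0 = 0 → b T = 0 →
      ∫ t in (0:ℝ)..T, f t * b t = 0) :
    ∀ t ∈ Set.Ioo (0:ℝ) T, f t = 0 := by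
  have key : ∀ t ∈ Set.Icc (0:ℝ) T, f t * (t * (T - t)) = 0 := by
    apply EB.moment hT (by fun_prop)
    intro n
    have hb : ContDiff ℝ (⊤ : ℕ∞) (fun t : ℝ => t * (T - t) * t ^ n) :=
      (contDiff_id.mul (contDiff_const.sub contDiff_id)).mul (contDiff_id.pow n)
    have h0 : (fun t : ℝ => t * (T - t) * t ^ n) 0 = 0 := by simp
    have hTT : (fun t : ℝ => t * (T - t) * t ^ n) T = 0 := by simp
    have hHH := H (fun t => t * (T - t) * t ^ n) hb h0 hTT
    have hcg : ∫ t in (0:ℝ)..T, f t * (t * (T - t)) * t ^ n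
        = ∫ t in (0:ℝ)..T, f t * ((fun t => t * (T - t) * t ^ n) t) :=
      intervalIntegral.integral_congr fun t _ => by ring
    rw [hcg]; exact hHH
  intro t ht
  have h1 := key t (Set.Ioo_subset_Icc_self ht)
  have h2 : 0 < t * (T - t) := mul_pos ht.1 (by linarith [ht.2])
  rcases mul_eq_zero.1 h1 with h | h
  · exact h
  · exact absurd h h2.ne'

theorem EB.flcvX {L : ℝ} (hL : 0 < L) {f : ℝ → ℝ} (hf : Continuous f)
    (H : ∀ a : ℝ → ℝ, ContDiff ℝ (⊤ : ℕ∞) a → a 0 = 0 → deriv a 0 = 0 → a L = 0 → deriv a L = 0 →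
      ∫ x in (0:ℝ)..L, f x * a x = 0) :
    ∀ x ∈ Set.Ioo (0:ℝ) L, f x = 0 := by
  have key : ∀ x ∈ Set.Icc (0:ℝ) L, f x * ((x - L) ^ 2 * x ^ 2) = 0 := by
    apply EB.moment hL (by fun_prop)
    intro n
    have haD : ∀ x : ℝ, HasDerivAt (fun x : ℝ => (x - L) ^ 2 * x ^ (n+2))
        (2 * (x - L) * x ^ (n+2) + (x - L) ^ 2 * (((n:ℝ) + 2) * x ^ (n+1))) x := by
      intro x
      have h1 : HasDerivAt (fun x : ℝ => (x - L) ^ 2) (2 * (x - L)) x := by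
        simpa using ((hasDerivAt_id x).sub_const L).fun_pow 2
      have h2 : HasDerivAt (fun x : ℝ => x ^ (n+2)) (((n:ℝ) + 2) * x ^ (n+1)) x := by
        have := hasDerivAt_pow (n+2) x
        norm_num at this
        convert this using 2 <;> push_cast <;> ring
      exact h1.mul h2
    have hd0 : deriv (fun x : ℝ => (x - L) ^ 2 * x ^ (n+2)) 0 = 0 := by
      rw [(haD 0).deriv]; simp
    have hdL : deriv (fun x : ℝ => (x - L) ^ 2 * x ^ (n+2)) L = 0 := by
      rw [(haD L).deriv]; simp
    have hsm : ContDiff ℝ (⊤ : ℕ∞) (fun x : ℝ => (x - L) ^ 2 * x ^ (n+2)) :=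
      ((contDiff_id.sub contDiff_const).pow 2).mul (contDiff_id.pow (n+2))
    have hHH := H (fun x => (x - L) ^ 2 * x ^ (n+2)) hsm (by simp) hd0 (by simp) hdL
    have hcg : ∫ x in (0:ℝ)..L, f x * ((x - L) ^ 2 * x ^ 2) * x ^ n
        = ∫ x in (0:ℝ)..L, f x * ((fun x => (x - L) ^ 2 * x ^ (n+2)) x) :=
      intervalIntegral.integral_congr fun x _ => by ring
    rw [hcg]; exact hHH
  intro x hx
  have h1 := key x (Set.Ioo_subset_Icc_self hx)
  have hxL : x - L ≠ 0 := sub_ne_zero.mpr (ne_of_lt hx.2)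
  have hx0 : x ≠ 0 := hx.1.ne'
  have hA : 0 < (x - L) ^ 2 := lt_of_le_of_ne (sq_nonneg _) (Ne.symm (pow_ne_zero 2 hxL))
  have hB : 0 < x ^ 2 := lt_of_le_of_ne (sq_nonneg _) (Ne.symm (pow_ne_zero 2 hx0))
  have h2 : 0 < (x - L) ^ 2 * x ^ 2 := mul_pos hA hB
  rcases mul_eq_zero.1 h1 with h | h
  · exact h
  · exact absurd h h2.ne'

theorem EB.fubini {L T : ℝ} (hL : 0 ≤ L) (hT : 0 ≤ T) {F : ℝ → ℝ → ℝ}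
    (hF : Continuous (uncurry F)) :
    ∫ t in (0:ℝ)..T, ∫ x in (0:ℝ)..L, F x t = ∫ x in (0:ℝ)..L, ∫ t in (0:ℝ)..T, F x t := by
  rw [intervalIntegral.integral_of_le hT, intervalIntegral.integral_of_le hL]
  simp_rw [intervalIntegral.integral_of_le hL, intervalIntegral.integral_of_le hT]
  apply MeasureTheory.integral_integral_swap (f := fun t x => F x t)
  rw [Measure.prod_restrict]
  have hc : Continuous fun z : ℝ × ℝ => F z.2 z.1 := hF.comp continuous_swap
  have : IntegrableOn (fun z : ℝ × ℝ => F z.2 z.1)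
      ((Set.Icc (0:ℝ) T) ×ˢ (Set.Icc (0:ℝ) L)) (volume.prod volume) :=
    hc.continuousOn.integrableOn_compact (isCompact_Icc.prod isCompact_Icc)
  exact this.mono_set (Set.prod_mono Set.Ioc_subset_Icc_self Set.Ioc_subset_Icc_self)

theorem EB.ibp (c : ℝ) {u u' B B' : ℝ → ℝ}
    (hu : ∀ t, HasDerivAt u (u' t) t) (hB : ∀ t, HasDerivAt B (B' t) t)
    (hu' : Continuous u') (hB' : Continuous B') (hB0 : B 0 = 0) (hBc : B c = 0) :
    ∫ t in (0:ℝ)..c, u t * B' t = - ∫ t in (0:ℝ)..c, u' t * B t := by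
  have h := intervalIntegral.integral_mul_deriv_eq_deriv_mul (a := (0:ℝ)) (b := c)
    (fun t _ => hu t) (fun t _ => hB t) (hu'.intervalIntegrable 0 c) (hB'.intervalIntegrable 0 c)
  rw [h, hB0, hBc]
  ring

theorem EB.ibp_x {L : ℝ} {U Ux : ℝ → ℝ → ℝ} {a a' : ℝ → ℝ} (t : ℝ)
    (hU : ∀ x, HasDerivAt (fun y => U y t) (Ux x t) x)
    (hUx : Continuous fun x => Ux x t)
    (haD : ∀ x, HasDerivAt a (a' x) x) (ha' : Continuous a') (ha0 : a 0 = 0) :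
    ∫ x in (0:ℝ)..L, U x t * a' x = U L t * a L - ∫ x in (0:ℝ)..L, Ux x t * a x := by
  have h := intervalIntegral.integral_mul_deriv_eq_deriv_mul (a := (0:ℝ)) (b := L)
    (u := fun x => U x t) (v := a) (u' := fun x => Ux x t) (v' := a')
    (fun x _ => hU x) (fun x _ => haD x) (hUx.intervalIntegrable 0 L)
    (ha'.intervalIntegrable 0 L)
  rw [h, ha0]
  ring

theorem EB.time_shift {L T : ℝ} (hL : 0 ≤ L) (hT : 0 ≤ T)
    {R Rt : ℝ → ℝ → ℝ} {κ B B' : ℝ → ℝ}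
    (hR : Continuous (Function.uncurry R)) (hRt : Continuous (Function.uncurry Rt))
    (hRd : ∀ x t, HasDerivAt (fun τ => R x τ) (Rt x t) t)
    (hκ : Continuous κ) (hB : ∀ t, HasDerivAt B (B' t) t) (hB' : Continuous B')
    (hBc : Continuous B) (hB0 : B 0 = 0) (hBT : B T = 0) :
    (∫ t in (0:ℝ)..T, B' t * ∫ x in (0:ℝ)..L, R x t * κ x)
      = - ∫ t in (0:ℝ)..T, B t * ∫ x in (0:ℝ)..L, Rt x t * κ x := by
  have cRs : ∀ x : ℝ, Continuous fun t => R x t := fun x => by fun_prop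
  have cRts : ∀ x : ℝ, Continuous fun t => Rt x t := fun x => by fun_prop
  have step1 : (∫ t in (0:ℝ)..T, B' t * ∫ x in (0:ℝ)..L, R x t * κ x)
      = ∫ t in (0:ℝ)..T, ∫ x in (0:ℝ)..L, R x t * κ x * B' t := by
    refine intervalIntegral.integral_congr fun t _ => ?_
    rw [← intervalIntegral.integral_const_mul]
    exact intervalIntegral.integral_congr fun x _ => by ring
  have step2 : (∫ t in (0:ℝ)..T, ∫ x in (0:ℝ)..L, R x t * κ x * B' t)
      = ∫ x in (0:ℝ)..L, ∫ t in (0:ℝ)..T, R x t * κ x * B' t :=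
    EB.fubini hL hT (by fun_prop)
  have step3 : (∫ x in (0:ℝ)..L, ∫ t in (0:ℝ)..T, R x t * κ x * B' t)
      = ∫ x in (0:ℝ)..L, - ∫ t in (0:ℝ)..T, Rt x t * κ x * B t := by
    refine intervalIntegral.integral_congr fun x _ => ?_
    have h1 : (∫ t in (0:ℝ)..T, R x t * κ x * B' t)
        = κ x * ∫ t in (0:ℝ)..T, R x t * B' t := by
      rw [← intervalIntegral.integral_const_mul]
      exact intervalIntegral.integral_congr fun t _ => by ring
    have h2 : (∫ t in (0:ℝ)..T, Rt x t * κ x * B t)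
        = κ x * ∫ t in (0:ℝ)..T, Rt x t * B t := by
      rw [← intervalIntegral.integral_const_mul]
      exact intervalIntegral.integral_congr fun t _ => by ring
    rw [h1, h2, EB.ibp T (hRd x) hB (cRts x) hB' hB0 hBT]
    ring
  have step4 : (∫ x in (0:ℝ)..L, - ∫ t in (0:ℝ)..T, Rt x t * κ x * B t)
      = - ∫ t in (0:ℝ)..T, ∫ x in (0:ℝ)..L, Rt x t * κ x * B t := by
    rw [intervalIntegral.integral_neg, EB.fubini hL hT (by fun_prop)]
  have step5 : (∫ t in (0:ℝ)..T, ∫ x in (0:ℝ)..L, Rt x t * κ x * B t)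
      = ∫ t in (0:ℝ)..T, B t * ∫ x in (0:ℝ)..L, Rt x t * κ x := by
    refine intervalIntegral.integral_congr fun t _ => ?_
    rw [← intervalIntegral.integral_const_mul]
    exact intervalIntegral.integral_congr fun x _ => by ring
  rw [step1, step2, step3, step4, step5]

section prodvar
variable {a b : ℝ → ℝ}

theorem EB.contDiff_prod (ha : ContDiff ℝ (⊤ : ℕ∞) a) (hb : ContDiff ℝ (⊤ : ℕ∞) b) :
    ContDiff ℝ (⊤ : ℕ∞) (Function.uncurry fun x t => a x * b t) :=
  (ha.comp contDiff_fst).mul (hb.comp contDiff_snd)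

theorem EB.contDiff_zero2 : ContDiff ℝ (⊤ : ℕ∞) (Function.uncurry fun _ _ : ℝ => (0:ℝ)) :=
  contDiff_const

theorem EB.pdx_prod (ha : ContDiff ℝ (⊤ : ℕ∞) a) :
    pdx (fun x t => a x * b t) = fun x t => deriv a x * b t := by
  funext x t
  exact (((ha.differentiable (by simp)).differentiableAt.hasDerivAt).mul_const (b t)).deriv

theorem EB.pdt_prod (ha : Differentiable ℝ b) :
    pdt (fun x t => a x * b t) = fun x t => a x * deriv b t := by
  funext x t
  exact ((ha.differentiableAt.hasDerivAt).const_mul (a x)).deriv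

theorem EB.pdx_zero : pdx (fun _ _ => (0:ℝ)) = fun _ _ => (0:ℝ) := by
  funext x t; simp [pdx]

theorem EB.pdt_zero : pdt (fun _ _ => (0:ℝ)) = fun _ _ => (0:ℝ) := by
  funext x t; simp [pdt]

end prodvar

theorem EB.contDiff_deriv {a : ℝ → ℝ} (ha : ContDiff ℝ (⊤ : ℕ∞) a) : ContDiff ℝ (⊤ : ℕ∞) (deriv a) := by
  have h : ContDiff ℝ (((⊤ : ℕ∞) : WithTop ℕ∞) + 1) a := by
    rw [show (((⊤ : ℕ∞) : WithTop ℕ∞) + 1) = ((⊤ : ℕ∞) : WithTop ℕ∞) from by rw [← WithTop.coe_one, ← WithTop.coe_add, top_add]]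
    exact ha
  exact (contDiff_succ_iff_deriv.mp h).2.2


theorem EB.firstVariation (L T h ρ α1 γ3 β3 μ : ℝ) (V g1 g m : ℝ → ℝ)
    (v w p φ η q : ℝ → ℝ → ℝ)
    (hv : ContDiff ℝ (⊤ : ℕ∞) (uncurry v)) (hw : ContDiff ℝ (⊤ : ℕ∞) (uncurry w))
    (hp : ContDiff ℝ (⊤ : ℕ∞) (uncurry p)) (hφ : ContDiff ℝ (⊤ : ℕ∞) (uncurry φ))
    (hη : ContDiff ℝ (⊤ : ℕ∞) (uncurry η)) (hq : ContDiff ℝ (⊤ : ℕ∞) (uncurry q))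
    (hV : Continuous V) (hg1 : Continuous g1) (hg : Continuous g) (hm : Continuous m) :
    HasDerivAt (fun ε => actionEB L T h ρ α1 γ3 β3 μ V g1 g m
      (fun x t => v x t + ε * φ x t) (fun x t => w x t + ε * η x t)
      (fun x t => p x t + ε * q x t))
    (∫ t in (0:ℝ)..T, ((ρ * h / 2) * (∫ x in (0:ℝ)..L, (2 * (pdt v x t * pdt φ x t + h ^ 2 / 12 * (pdt (pdx w) x t * pdt (pdx η) x t) + pdt w x t * pdt η x t))) - (h / 2) * (∫ x in (0:ℝ)..L, (2 * (α1 * ((pdx v x t + (pdx w x t) ^ 2 / 2) * (pdx φ x t + pdx w x t * pdx η x t) + h ^ 2 / 12 * (pdx (pdx w) x t * pdx (pdx η) x t)) - γ3 * β3 * ((pdx φ x t + pdx w x t * pdx η x t) * pdx p x t + (pdx v x t + (pdx w x t) ^ 2 / 2) * pdx q x t) + β3 * (pdx p x t * pdx q x t)))) + (μ * h / 2) * (∫ x in (0:ℝ)..L, (2 * (pdt p x t * pdt q x t))) - V t * q L t + g1 t * φ L t + g t * η L t - m t * pdx η L t)) 0 := by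
  -- continuity of all derivative atoms
  have cv : Continuous (uncurry v) := hv.continuous
  have cw : Continuous (uncurry w) := hw.continuous
  have cp : Continuous (uncurry p) := hp.continuous
  have cφ : Continuous (uncurry φ) := hφ.continuous
  have cη : Continuous (uncurry η) := hη.continuous
  have cq : Continuous (uncurry q) := hq.continuous
  have cvt : Continuous (uncurry (pdt v)) := (contDiff_pdt hv).continuous
  have cvx : Continuous (uncurry (pdx v)) := (contDiff_pdx hv).continuous
  have cwt : Continuous (uncurry (pdt w)) := (contDiff_pdt hw).continuous
  have cwx : Continuous (uncurry (pdx w)) := (contDiff_pdx hw).continuous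
  have cwxt : Continuous (uncurry (pdt (pdx w))) := (contDiff_pdt (contDiff_pdx hw)).continuous
  have cwxx : Continuous (uncurry (pdx (pdx w))) := (contDiff_pdx (contDiff_pdx hw)).continuous
  have cpt : Continuous (uncurry (pdt p)) := (contDiff_pdt hp).continuous
  have cpx : Continuous (uncurry (pdx p)) := (contDiff_pdx hp).continuous
  have cφt : Continuous (uncurry (pdt φ)) := (contDiff_pdt hφ).continuous
  have cφx : Continuous (uncurry (pdx φ)) := (contDiff_pdx hφ).continuous
  have cηt : Continuous (uncurry (pdt η)) := (contDiff_pdt hη).continuous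
  have cηx : Continuous (uncurry (pdx η)) := (contDiff_pdx hη).continuous
  have cηxt : Continuous (uncurry (pdt (pdx η))) := (contDiff_pdt (contDiff_pdx hη)).continuous
  have cηxx : Continuous (uncurry (pdx (pdx η))) := (contDiff_pdx (contDiff_pdx hη)).continuous
  have cqt : Continuous (uncurry (pdt q)) := (contDiff_pdt hq).continuous
  have cqx : Continuous (uncurry (pdx q)) := (contDiff_pdx hq).continuous
  -- the five outer-integrand coefficient functions are continuous in t
  have cJ0 : Continuous fun t => ((ρ * h / 2) * (∫ x in (0:ℝ)..L, ((pdt v x t) ^ 2 + (h ^ 2 / 12) * (pdt (pdx w) x t) ^ 2 + (pdt w x t) ^ 2)) - (h / 2) * (∫ x in (0:ℝ)..L, (α1 * ((pdx v x t + (pdx w x t) ^ 2 / 2) ^ 2 + (h ^ 2 / 12) * (pdx (pdx w) x t) ^ 2) - 2 * γ3 * β3 * (pdx v x t + (pdx w x t) ^ 2 / 2) * pdx p x t + β3 * (pdx p x t) ^ 2)) + (μ * h / 2) * (∫ x in (0:ℝ)..L, ((pdt p x t) ^ 2)) - V t * p L t + g1 t * v L t + g t * w L t - m t * pdx w L t)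 := by fun_prop
  have cJ1 : Continuous fun t => ((ρ * h / 2) * (∫ x in (0:ℝ)..L, (2 * (pdt v x t * pdt φ x t + h ^ 2 / 12 * (pdt (pdx w) x t * pdt (pdx η) x t) + pdt w x t * pdt η x t))) - (h / 2) * (∫ x in (0:ℝ)..L, (2 * (α1 * ((pdx v x t + (pdx w x t) ^ 2 / 2) * (pdx φ x t + pdx w x t * pdx η x t) + h ^ 2 / 12 * (pdx (pdx w) x t * pdx (pdx η) x t)) - γ3 * β3 * ((pdx φ x t + pdx w x t * pdx η x t) * pdx p x t + (pdx v x t + (pdx w x t) ^ 2 / 2) * pdx q x t) + β3 * (pdx p x t * pdx q x t)))) + (μ * h / 2) * (∫ x in (0:ℝ)..L, (2 * (pdt p x t * pdt q x t))) - V t * q L t + g1 t * φ L t + g t * η L t - m t * pdx η L t) := by fun_prop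
  have cJ2 : Continuous fun t => ((ρ * h / 2) * (∫ x in (0:ℝ)..L, ((pdt φ x t) ^ 2 + h ^ 2 / 12 * (pdt (pdx η) x t) ^ 2 + (pdt η x t) ^ 2)) - (h / 2) * (∫ x in (0:ℝ)..L, (α1 * ((pdx φ x t + pdx w x t * pdx η x t) ^ 2 + 2 * (pdx v x t + (pdx w x t) ^ 2 / 2) * ((pdx η x t) ^ 2 / 2) + h ^ 2 / 12 * (pdx (pdx η) x t) ^ 2) - 2 * γ3 * β3 * (((pdx η x t) ^ 2 / 2) * pdx p x t + (pdx φ x t + pdx w x t * pdx η x t) * pdx q x t) + β3 * (pdx q x t) ^ 2)) + (μ * h / 2) * (∫ x in (0:ℝ)..L, ((pdt q x t) ^ 2))) := by fun_prop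
  have cJ3 : Continuous fun t => (-(h / 2) * (∫ x in (0:ℝ)..L, (2 * α1 * (pdx φ x t + pdx w x t * pdx η x t) * ((pdx η x t) ^ 2 / 2) - 2 * γ3 * β3 * ((pdx η x t) ^ 2 / 2) * pdx q x t))) := by fun_prop
  have cJ4 : Continuous fun t => (-(h / 2) * (∫ x in (0:ℝ)..L, (α1 * ((pdx η x t) ^ 2 / 2) ^ 2))) := by fun_prop
  have key : ∀ ε : ℝ, actionEB L T h ρ α1 γ3 β3 μ V g1 g m
      (fun x t => v x t + ε * φ x t) (fun x t => w x t + ε * η x t)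
      (fun x t => p x t + ε * q x t)
      = (∫ t in (0:ℝ)..T, ((ρ * h / 2) * (∫ x in (0:ℝ)..L, ((pdt v x t) ^ 2 + (h ^ 2 / 12) * (pdt (pdx w) x t) ^ 2 + (pdt w x t) ^ 2)) - (h / 2) * (∫ x in (0:ℝ)..L, (α1 * ((pdx v x t + (pdx w x t) ^ 2 / 2) ^ 2 + (h ^ 2 / 12) * (pdx (pdx w) x t) ^ 2) - 2 * γ3 * β3 * (pdx v x t + (pdx w x t) ^ 2 / 2) * pdx p x t + β3 * (pdx p x t) ^ 2)) + (μ * h / 2) * (∫ x in (0:ℝ)..L, ((pdt p x t) ^ 2)) - V t * p L t + g1 t * v L t + g t * w L t - m t * pdx w L t)) + ε * (∫ t in (0:ℝ)..T, ((ρ * h / 2) * (∫ x in (0:ℝ)..L, (2 * (pdt v x t * pdt φ x t + h ^ 2 / 12 * (pdt (pdx w) x t * pdt (pdx η) x t) + pdt w x t * pdt η x t))) - (h / 2) * (∫ x in (0:ℝ)..L, (2 * (α1 * ((pdx v x t + (pdx w x t) ^ 2 / 2) * (pdx φ x t + pdx w x t * pdx η x t) + h ^ 2 / 12 * (pdx (pdx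 w) x t * pdx (pdx η) x t)) - γ3 * β3 * ((pdx φ x t + pdx w x t * pdx η x t) * pdx p x t + (pdx v x t + (pdx w x t) ^ 2 / 2) * pdx q x t) + β3 * (pdx p x t * pdx q x t)))) + (μ * h / 2) * (∫ x in (0:ℝ)..L, (2 * (pdt p x t * pdt q x t))) - V t * q L t + g1 t * φ L t + g t * η L t - m t * pdx η L t))
        + ε ^ 2 * (∫ t in (0:ℝ)..T, ((ρ * h / 2) * (∫ x in (0:ℝ)..L, ((pdt φ x t) ^ 2 + h ^ 2 / 12 * (pdt (pdx η) x t) ^ 2 + (pdt η x t) ^ 2)) - (h / 2) * (∫ x in (0:ℝ)..L, (α1 * ((pdx φ x t + pdx w x t * pdx η x t) ^ 2 + 2 * (pdx v x t + (pdx w x t) ^ 2 / 2) * ((pdx η x t) ^ 2 / 2) + h ^ 2 / 12 * (pdx (pdx η) x t) ^ 2) - 2 * γ3 * β3 * (((pdx η x t) ^ 2 / 2) * pdx p x t + (pdx φ x t + pdx w x t * pdx η x t) * pdx q x t) + β3 * (pdx q x t) ^ 2)) + (μ * h / 2) * (∫ x in (0:ℝ)..L, ((pdt q x t) ^ 2))))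 + ε ^ 3 * (∫ t in (0:ℝ)..T, (-(h / 2) * (∫ x in (0:ℝ)..L, (2 * α1 * (pdx φ x t + pdx w x t * pdx η x t) * ((pdx η x t) ^ 2 / 2) - 2 * γ3 * β3 * ((pdx η x t) ^ 2 / 2) * pdx q x t))))
        + ε ^ 4 * (∫ t in (0:ℝ)..T, (-(h / 2) * (∫ x in (0:ℝ)..L, (α1 * ((pdx η x t) ^ 2 / 2) ^ 2)))) := by
    intro ε
    have e1 : pdt (fun x t => v x t + ε * φ x t) = fun x t => pdt v x t + ε * pdt φ x t :=
      pdt_perturb hv hφ ε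
    have e2 : pdx (fun x t => v x t + ε * φ x t) = fun x t => pdx v x t + ε * pdx φ x t :=
      pdx_perturb hv hφ ε
    have e3 : pdt (fun x t => w x t + ε * η x t) = fun x t => pdt w x t + ε * pdt η x t :=
      pdt_perturb hw hη ε
    have e4 : pdx (fun x t => w x t + ε * η x t) = fun x t => pdx w x t + ε * pdx η x t :=
      pdx_perturb hw hη ε
    have e5 : pdt (fun x t => pdx w x t + ε * pdx η x t)
        = fun x t => pdt (pdx w) x t + ε * pdt (pdx η) x t :=
      pdt_perturb (contDiff_pdx hw) (contDiff_pdx hη) ε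
    have e6 : pdx (fun x t => pdx w x t + ε * pdx η x t)
        = fun x t => pdx (pdx w) x t + ε * pdx (pdx η) x t :=
      pdx_perturb (contDiff_pdx hw) (contDiff_pdx hη) ε
    have e7 : pdt (fun x t => p x t + ε * q x t) = fun x t => pdt p x t + ε * pdt q x t :=
      pdt_perturb hp hq ε
    have e8 : pdx (fun x t => p x t + ε * q x t) = fun x t => pdx p x t + ε * pdx q x t :=
      pdx_perturb hp hq ε
    rw [actionEB]
    rw [show (∫ t in (0:ℝ)..T,
        ((ρ * h / 2) * (∫ x in (0:ℝ)..L,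
            ((pdt (fun x t => v x t + ε * φ x t) x t) ^ 2
              + (h ^ 2 / 12) * (pdt (pdx (fun x t => w x t + ε * η x t)) x t) ^ 2
              + (pdt (fun x t => w x t + ε * η x t) x t) ^ 2))
        - (h / 2) * (∫ x in (0:ℝ)..L,
            (α1 * ((pdx (fun x t => v x t + ε * φ x t) x t
                + (pdx (fun x t => w x t + ε * η x t) x t) ^ 2 / 2) ^ 2
                + (h ^ 2 / 12) * (pdx (pdx (fun x t => w x t + ε * η x t)) x t) ^ 2)
              - 2 * γ3 * β3 * (pdx (fun x t => v x t + ε * φ x t) x t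
                + (pdx (fun x t => w x t + ε * η x t) x t) ^ 2 / 2)
                  * pdx (fun x t => p x t + ε * q x t) x t
              + β3 * (pdx (fun x t => p x t + ε * q x t) x t) ^ 2))
        + (μ * h / 2) * (∫ x in (0:ℝ)..L, (pdt (fun x t => p x t + ε * q x t) x t) ^ 2)
        - V t * (p L t + ε * q L t) + g1 t * (v L t + ε * φ L t) + g t * (w L t + ε * η L t)
        - m t * pdx (fun x t => w x t + ε * η x t) L t))
      = ∫ t in (0:ℝ)..T, (((ρ * h / 2) * (∫ x in (0:ℝ)..L, ((pdt v x t) ^ 2 + (h ^ 2 / 12) * (pdt (pdx w) x t) ^ 2 + (pdt w x t) ^ 2)) - (h / 2) * (∫ x in (0:ℝ)..L, (α1 * ((pdx v x t + (pdx w x t) ^ 2 / 2) ^ 2 + (h ^ 2 / 12) * (pdx (pdx w) x t) ^ 2) - 2 * γ3 * β3 * (pdx v x t + (pdx w x t) ^ 2 / 2) * pdx p x t + β3 * (pdx p x t) ^ 2)) + (μ * h / 2) * (∫ x in (0:ℝ)..L, ((pdt p x t) ^ 2)) - V t * p L t + g1 t * v L t + g t * w L t - m t * pdx w L t) + ε *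 ((ρ * h / 2) * (∫ x in (0:ℝ)..L, (2 * (pdt v x t * pdt φ x t + h ^ 2 / 12 * (pdt (pdx w) x t * pdt (pdx η) x t) + pdt w x t * pdt η x t))) - (h / 2) * (∫ x in (0:ℝ)..L, (2 * (α1 * ((pdx v x t + (pdx w x t) ^ 2 / 2) * (pdx φ x t + pdx w x t * pdx η x t) + h ^ 2 / 12 * (pdx (pdx w) x t * pdx (pdx η) x t)) - γ3 * β3 * ((pdx φ x t + pdx w x t * pdx η x t) * pdx p x t + (pdx v x t + (pdx w x t) ^ 2 / 2) * pdx q x t) + β3 * (pdx p x t * pdx q x t)))) + (μ * h / 2) * (∫ x in (0:ℝ)..L, (2 * (pdt p x t * pdt q x t))) - V t * q L t + g1 t * φ L t + g t * η L t - m t * pdx η L t) + ε ^ 2 * ((ρ * h / 2) * (∫ x in (0:ℝ)..L, ((pdt φ x t) ^ 2 + h ^ 2 / 12 * (pdt (pdx η) x t) ^ 2 + (pdt η x t) ^ 2)) - (h / 2) * (∫ x in (0:ℝ)..L, (α1 * ((pdx φ x t + pdx w x t * pdx η x t) ^ 2 + 2 * (pdx v x t + (pdx w x t) ^ 2 / 2)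 * ((pdx η x t) ^ 2 / 2) + h ^ 2 / 12 * (pdx (pdx η) x t) ^ 2) - 2 * γ3 * β3 * (((pdx η x t) ^ 2 / 2) * pdx p x t + (pdx φ x t + pdx w x t * pdx η x t) * pdx q x t) + β3 * (pdx q x t) ^ 2)) + (μ * h / 2) * (∫ x in (0:ℝ)..L, ((pdt q x t) ^ 2))) + ε ^ 3 * (-(h / 2) * (∫ x in (0:ℝ)..L, (2 * α1 * (pdx φ x t + pdx w x t * pdx η x t) * ((pdx η x t) ^ 2 / 2) - 2 * γ3 * β3 * ((pdx η x t) ^ 2 / 2) * pdx q x t))) + ε ^ 4 * (-(h / 2) * (∫ x in (0:ℝ)..L, (α1 * ((pdx η x t) ^ 2 / 2) ^ 2)))) from ?_]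
    · exact EB.split4 (cJ0.intervalIntegrable 0 T) (cJ1.intervalIntegrable 0 T)
        (cJ2.intervalIntegrable 0 T) (cJ3.intervalIntegrable 0 T) (cJ4.intervalIntegrable 0 T)
    refine intervalIntegral.integral_congr fun t _ => ?_
    simp only [e1, e2, e3, e4, e5, e6, e7, e8]
    have i1 : (∫ x in (0:ℝ)..L, ((pdt v x t + ε * pdt φ x t) ^ 2 + (h ^ 2 / 12) * (pdt (pdx w) x t + ε * pdt (pdx η) x t) ^ 2 + (pdt w x t + ε * pdt η x t) ^ 2))
        = (∫ x in (0:ℝ)..L, ((pdt v x t) ^ 2 + (h ^ 2 / 12) * (pdt (pdx w) x t) ^ 2 + (pdt w x t) ^ 2)) + ε * (∫ x in (0:ℝ)..L, (2 * (pdt v x t * pdt φ x t + h ^ 2 / 12 * (pdt (pdx w) x t * pdt (pdx η) x t) + pdt w x t * pdt η x t))) + ε ^ 2 * (∫ x in (0:ℝ)..L, ((pdt φ x t) ^ 2 + h ^ 2 / 12 * (pdt (pdx η) x t) ^ 2 + (pdt η x t) ^ 2)) := by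
      rw [intervalIntegral.integral_congr
        (g := fun x => ((pdt v x t) ^ 2 + (h ^ 2 / 12) * (pdt (pdx w) x t) ^ 2 + (pdt w x t) ^ 2) + ε * (2 * (pdt v x t * pdt φ x t + h ^ 2 / 12 * (pdt (pdx w) x t * pdt (pdx η) x t) + pdt w x t * pdt η x t)) + ε ^ 2 * ((pdt φ x t) ^ 2 + h ^ 2 / 12 * (pdt (pdx η) x t) ^ 2 + (pdt η x t) ^ 2)) (fun x _ => by ring)]
      exact EB.split2 ((by fun_prop : Continuous fun x => ((pdt v x t) ^ 2 + (h ^ 2 / 12) * (pdt (pdx w) x t) ^ 2 + (pdt w x t) ^ 2)).intervalIntegrable 0 L)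
        ((by fun_prop : Continuous fun x => (2 * (pdt v x t * pdt φ x t + h ^ 2 / 12 * (pdt (pdx w) x t * pdt (pdx η) x t) + pdt w x t * pdt η x t))).intervalIntegrable 0 L)
        ((by fun_prop : Continuous fun x => ((pdt φ x t) ^ 2 + h ^ 2 / 12 * (pdt (pdx η) x t) ^ 2 + (pdt η x t) ^ 2)).intervalIntegrable 0 L)
    have i2 : (∫ x in (0:ℝ)..L, (α1 * ((pdx v x t + ε * pdx φ x t + (pdx w x t + ε * pdx η x t) ^ 2 / 2) ^ 2 + (h ^ 2 / 12) * (pdx (pdx w) x t + ε * pdx (pdx η) x t) ^ 2) - 2 * γ3 * β3 * (pdx v x t + ε * pdx φ x t + (pdx w x t + ε * pdx η x t) ^ 2 / 2) * (pdx p x t + ε * pdx q x t) + β3 * (pdx p x t + ε * pdx q x t) ^ 2))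
        = (∫ x in (0:ℝ)..L, (α1 * ((pdx v x t + (pdx w x t) ^ 2 / 2) ^ 2 + (h ^ 2 / 12) * (pdx (pdx w) x t) ^ 2) - 2 * γ3 * β3 * (pdx v x t + (pdx w x t) ^ 2 / 2) * pdx p x t + β3 * (pdx p x t) ^ 2)) + ε * (∫ x in (0:ℝ)..L, (2 * (α1 * ((pdx v x t + (pdx w x t) ^ 2 / 2) * (pdx φ x t + pdx w x t * pdx η x t) + h ^ 2 / 12 * (pdx (pdx w) x t * pdx (pdx η) x t)) - γ3 * β3 * ((pdx φ x t + pdx w x t * pdx η x t) * pdx p x t + (pdx v x t + (pdx w x t) ^ 2 / 2) * pdx q x t) + β3 * (pdx p x t * pdx q x t)))) + ε ^ 2 * (∫ x in (0:ℝ)..L, (α1 * ((pdx φ x t + pdx w x t * pdx η x t) ^ 2 + 2 * (pdx v x t + (pdx w x t) ^ 2 / 2) * ((pdx η x t) ^ 2 / 2) + h ^ 2 / 12 * (pdx (pdx η) x t) ^ 2) - 2 * γ3 * β3 * (((pdx η x t) ^ 2 / 2) * pdx p x t + (pdx φ x t + pdx w x t * pdx η x t) * pdx q x t) + β3 * (pdx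 q x t) ^ 2)) + ε ^ 3 * (∫ x in (0:ℝ)..L, (2 * α1 * (pdx φ x t + pdx w x t * pdx η x t) * ((pdx η x t) ^ 2 / 2) - 2 * γ3 * β3 * ((pdx η x t) ^ 2 / 2) * pdx q x t)) + ε ^ 4 * (∫ x in (0:ℝ)..L, (α1 * ((pdx η x t) ^ 2 / 2) ^ 2)) := by
      rw [intervalIntegral.integral_congr
        (g := fun x => (α1 * ((pdx v x t + (pdx w x t) ^ 2 / 2) ^ 2 + (h ^ 2 / 12) * (pdx (pdx w) x t) ^ 2) - 2 * γ3 * β3 * (pdx v x t + (pdx w x t) ^ 2 / 2) * pdx p x t + β3 * (pdx p x t) ^ 2) + ε * (2 * (α1 * ((pdx v x t + (pdx w x t) ^ 2 / 2) * (pdx φ x t + pdx w x t * pdx η x t) + h ^ 2 / 12 * (pdx (pdx w) x t * pdx (pdx η) x t)) - γ3 * β3 * ((pdx φ x t + pdx w x t * pdx η x t) * pdx p x t + (pdx v x t + (pdx w x t) ^ 2 / 2) * pdx q x t) + β3 * (pdx p x t * pdx q x t))) + ε ^ 2 * (α1 * ((pdx φ x t + pdx w x t * pdx η x t) ^ 2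 + 2 * (pdx v x t + (pdx w x t) ^ 2 / 2) * ((pdx η x t) ^ 2 / 2) + h ^ 2 / 12 * (pdx (pdx η) x t) ^ 2) - 2 * γ3 * β3 * (((pdx η x t) ^ 2 / 2) * pdx p x t + (pdx φ x t + pdx w x t * pdx η x t) * pdx q x t) + β3 * (pdx q x t) ^ 2) + ε ^ 3 * (2 * α1 * (pdx φ x t + pdx w x t * pdx η x t) * ((pdx η x t) ^ 2 / 2) - 2 * γ3 * β3 * ((pdx η x t) ^ 2 / 2) * pdx q x t) + ε ^ 4 * (α1 * ((pdx η x t) ^ 2 / 2) ^ 2))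
        (fun x _ => by ring)]
      exact EB.split4 ((by fun_prop : Continuous fun x => (α1 * ((pdx v x t + (pdx w x t) ^ 2 / 2) ^ 2 + (h ^ 2 / 12) * (pdx (pdx w) x t) ^ 2) - 2 * γ3 * β3 * (pdx v x t + (pdx w x t) ^ 2 / 2) * pdx p x t + β3 * (pdx p x t) ^ 2)).intervalIntegrable 0 L)
        ((by fun_prop : Continuous fun x => (2 * (α1 * ((pdx v x t + (pdx w x t) ^ 2 / 2) * (pdx φ x t + pdx w x t * pdx η x t) + h ^ 2 / 12 * (pdx (pdx w) x t * pdx (pdx η) x t)) - γ3 * β3 * ((pdx φ x t + pdx w x t * pdx η x t) * pdx p x t + (pdx v x t + (pdx w x t) ^ 2 / 2) * pdx q x t) + β3 * (pdx p x t * pdx q x t)))).intervalIntegrable 0 L)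
        ((by fun_prop : Continuous fun x => (α1 * ((pdx φ x t + pdx w x t * pdx η x t) ^ 2 + 2 * (pdx v x t + (pdx w x t) ^ 2 / 2) * ((pdx η x t) ^ 2 / 2) + h ^ 2 / 12 * (pdx (pdx η) x t) ^ 2) - 2 * γ3 * β3 * (((pdx η x t) ^ 2 / 2) * pdx p x t + (pdx φ x t + pdx w x t * pdx η x t) * pdx q x t) + β3 * (pdx q x t) ^ 2)).intervalIntegrable 0 L)
        ((by fun_prop : Continuous fun x => (2 * α1 * (pdx φ x t + pdx w x t * pdx η x t) * ((pdx η x t) ^ 2 / 2) - 2 * γ3 * β3 * ((pdx η x t) ^ 2 / 2) * pdx q x t)).intervalIntegrable 0 L)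
        ((by fun_prop : Continuous fun x => (α1 * ((pdx η x t) ^ 2 / 2) ^ 2)).intervalIntegrable 0 L)
    have i3 : (∫ x in (0:ℝ)..L, ((pdt p x t + ε * pdt q x t) ^ 2))
        = (∫ x in (0:ℝ)..L, ((pdt p x t) ^ 2)) + ε * (∫ x in (0:ℝ)..L, (2 * (pdt p x t * pdt q x t))) + ε ^ 2 * (∫ x in (0:ℝ)..L, ((pdt q x t) ^ 2)) := by
      rw [intervalIntegral.integral_congr
        (g := fun x => ((pdt p x t) ^ 2) + ε * (2 * (pdt p x t * pdt q x t)) + ε ^ 2 * ((pdt q x t) ^ 2)) (fun x _ => by ring)]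
      exact EB.split2 ((by fun_prop : Continuous fun x => ((pdt p x t) ^ 2)).intervalIntegrable 0 L)
        ((by fun_prop : Continuous fun x => (2 * (pdt p x t * pdt q x t))).intervalIntegrable 0 L)
        ((by fun_prop : Continuous fun x => ((pdt q x t) ^ 2)).intervalIntegrable 0 L)
    rw [i1, i2, i3]
    ring
  have hpoly := EB.derivPoly (∫ t in (0:ℝ)..T, ((ρ * h / 2) * (∫ x in (0:ℝ)..L, ((pdt v x t) ^ 2 + (h ^ 2 / 12) * (pdt (pdx w) x t) ^ 2 + (pdt w x t) ^ 2)) - (h / 2) * (∫ x in (0:ℝ)..L, (α1 * ((pdx v x t + (pdx w x t) ^ 2 / 2) ^ 2 + (h ^ 2 / 12) * (pdx (pdx w) x t) ^ 2) - 2 * γ3 * β3 * (pdx v x t + (pdx w x t) ^ 2 / 2) * pdx p x t + β3 * (pdx p x t) ^ 2)) + (μ * h / 2) * (∫ x in (0:ℝ)..L, ((pdt p x t) ^ 2)) - V t * p L t + g1 t * v L t + g t * w L t - m t * pdx w L t)) (∫ t in (0:ℝ)..T, ((ρ * h / 2) * (∫ x in (0:ℝ)..L, (2 * (pdt v x t *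 pdt φ x t + h ^ 2 / 12 * (pdt (pdx w) x t * pdt (pdx η) x t) + pdt w x t * pdt η x t))) - (h / 2) * (∫ x in (0:ℝ)..L, (2 * (α1 * ((pdx v x t + (pdx w x t) ^ 2 / 2) * (pdx φ x t + pdx w x t * pdx η x t) + h ^ 2 / 12 * (pdx (pdx w) x t * pdx (pdx η) x t)) - γ3 * β3 * ((pdx φ x t + pdx w x t * pdx η x t) * pdx p x t + (pdx v x t + (pdx w x t) ^ 2 / 2) * pdx q x t) + β3 * (pdx p x t * pdx q x t)))) + (μ * h / 2) * (∫ x in (0:ℝ)..L, (2 * (pdt p x t * pdt q x t))) - V t * q L t + g1 t * φ L t + g t * η L t - m t * pdx η L t))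
    (∫ t in (0:ℝ)..T, ((ρ * h / 2) * (∫ x in (0:ℝ)..L, ((pdt φ x t) ^ 2 + h ^ 2 / 12 * (pdt (pdx η) x t) ^ 2 + (pdt η x t) ^ 2)) - (h / 2) * (∫ x in (0:ℝ)..L, (α1 * ((pdx φ x t + pdx w x t * pdx η x t) ^ 2 + 2 * (pdx v x t + (pdx w x t) ^ 2 / 2) * ((pdx η x t) ^ 2 / 2) + h ^ 2 / 12 * (pdx (pdx η) x t) ^ 2) - 2 * γ3 * β3 * (((pdx η x t) ^ 2 / 2) * pdx p x t + (pdx φ x t + pdx w x t * pdx η x t) * pdx q x t) + β3 * (pdx q x t) ^ 2)) + (μ * h / 2) * (∫ x in (0:ℝ)..L, ((pdt q x t) ^ 2)))) (∫ t in (0:ℝ)..T, (-(h / 2) * (∫ x in (0:ℝ)..L, (2 * α1 * (pdx φ x t + pdx w x t * pdx η x t) * ((pdx η x t) ^ 2 / 2) - 2 * γ3 * β3 * ((pdx η x t) ^ 2 / 2) * pdx q x t)))) (∫ t in (0:ℝ)..T, (-(h / 2) * (∫ x in (0:ℝ)..L, (α1 * ((pdx η x t) ^ 2 / 2) ^ 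2))))
  exact hpoly.congr_of_eventuallyEq (Filter.Eventually.of_forall fun ε => key ε)


theorem EB.caseA (L T h ρ α1 γ3 β3 : ℝ) (hL : 0 < L) (hT : 0 < T)
    (v w p : ℝ → ℝ → ℝ) (g1 : ℝ → ℝ)
    (hv : ContDiff ℝ (⊤ : ℕ∞) (uncurry v)) (hw : ContDiff ℝ (⊤ : ℕ∞) (uncurry w))
    (hp : ContDiff ℝ (⊤ : ℕ∞) (uncurry p)) (hg1 : Continuous g1)
    (HW : ∀ a b : ℝ → ℝ, ContDiff ℝ (⊤ : ℕ∞) a → ContDiff ℝ (⊤ : ℕ∞) b → a 0 = 0 → b 0 = 0 → b T = 0 →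
      (∫ t in (0:ℝ)..T, (deriv b t * (∫ x in (0:ℝ)..L, (ρ * h * pdt v x t) * a x)
        + b t * ((∫ x in (0:ℝ)..L, (-(h * α1) * (pdx v x t + (pdx w x t) ^ 2 / 2) + h * γ3 * β3 * pdx p x t) * deriv a x) + g1 t * a L))) = 0) :
    (∀ t ∈ Set.Ioo (0:ℝ) T, ∀ x ∈ Set.Ioo (0:ℝ) L,
      ρ * h * pdt (pdt v) x t - α1 * h * pdx (fun x t => pdx v x t + (pdx w x t) ^ 2 / 2) x t + γ3 * β3 * h * pdx (pdx p) x t = 0)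
    ∧ (∀ t ∈ Set.Ioo (0:ℝ) T,
      α1 * h * (pdx v L t + (pdx w L t) ^ 2 / 2) - γ3 * β3 * h * pdx p L t = g1 t) := by
  have hS : ContDiff ℝ (⊤ : ℕ∞) (uncurry (fun x t => pdx v x t + (pdx w x t) ^ 2 / 2)) :=
    (contDiff_pdx hv).add (((contDiff_pdx hw).pow 2).div_const 2)
  have cS : Continuous (uncurry (fun x t => pdx v x t + (pdx w x t) ^ 2 / 2)) := hS.continuous
  have cSx : Continuous (uncurry (pdx (fun x t => pdx v x t + (pdx w x t) ^ 2 / 2))) := (contDiff_pdx hS).continuous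
  have cvt : Continuous (uncurry (pdt v)) := (contDiff_pdt hv).continuous
  have cvtt : Continuous (uncurry (pdt (pdt v))) := (contDiff_pdt (contDiff_pdt hv)).continuous
  have cvx : Continuous (uncurry (pdx v)) := (contDiff_pdx hv).continuous
  have cwx : Continuous (uncurry (pdx w)) := (contDiff_pdx hw).continuous
  have cpx : Continuous (uncurry (pdx p)) := (contDiff_pdx hp).continuous
  have cpxx : Continuous (uncurry (pdx (pdx p))) := (contDiff_pdx (contDiff_pdx hp)).continuous
  have key : ∀ a : ℝ → ℝ, ContDiff ℝ (⊤ : ℕ∞) a → a 0 = 0 → ∀ t ∈ Set.Ioo (0:ℝ) T,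
      (∫ x in (0:ℝ)..L, (-(ρ * h * pdt (pdt v) x t) + h * α1 * pdx (fun x t => pdx v x t + (pdx w x t) ^ 2 / 2) x t - h * γ3 * β3 * pdx (pdx p) x t) * a x) + (g1 t + (-(h * α1) * (pdx v L t + (pdx w L t) ^ 2 / 2) + h * γ3 * β3 * pdx p L t)) * a L = 0 := by
    intro a ha ha0
    have hac : Continuous a := ha.continuous
    have hdac : Continuous (deriv a) := (EB.contDiff_deriv ha).continuous
    apply EB.flcvT hT (by fun_prop)
    intro b hb hb0 hbT
    have hbc : Continuous b := hb.continuous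
    have hdbc : Continuous (deriv b) := (EB.contDiff_deriv hb).continuous
    have hw1 := HW a b ha hb ha0 hb0 hbT
    have hint1 : IntervalIntegrable
        (fun t => deriv b t * (∫ x in (0:ℝ)..L, (ρ * h * pdt v x t) * a x)) volume 0 T :=
      (by fun_prop : Continuous fun t => deriv b t * (∫ x in (0:ℝ)..L, (ρ * h * pdt v x t) * a x)).intervalIntegrable 0 T
    have hint2 : IntervalIntegrable
        (fun t => b t * ((∫ x in (0:ℝ)..L, (-(h * α1) * (pdx v x t + (pdx w x t) ^ 2 / 2) + h * γ3 * β3 * pdx p x t) * deriv a x) + g1 t * a L)) volume 0 T :=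
      (by fun_prop : Continuous fun t => b t * ((∫ x in (0:ℝ)..L, (-(h * α1) * (pdx v x t + (pdx w x t) ^ 2 / 2) + h * γ3 * β3 * pdx p x t) * deriv a x) + g1 t * a L)).intervalIntegrable 0 T
    rw [intervalIntegral.integral_add hint1 hint2] at hw1
    have hts := EB.time_shift (L := L) (T := T) hL.le hT.le
      (R := fun x t => ρ * h * pdt v x t) (Rt := fun x t => ρ * h * pdt (pdt v) x t)
      (κ := a) (B := b) (B' := deriv b)
      (by fun_prop) (by fun_prop)
      (fun x t => (hasDerivAt_pdt (contDiff_pdt hv) x t).const_mul (ρ * h))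
      hac (fun t => (hb.differentiable (by simp) t).hasDerivAt) hdbc hbc hb0 hbT
    rw [hts] at hw1
    have h3 : (∫ t in (0:ℝ)..T, ((∫ x in (0:ℝ)..L, (-(ρ * h * pdt (pdt v) x t) + h * α1 * pdx (fun x t => pdx v x t + (pdx w x t) ^ 2 / 2) x t - h * γ3 * β3 * pdx (pdx p) x t) * a x) + (g1 t + (-(h * α1) * (pdx v L t + (pdx w L t) ^ 2 / 2) + h * γ3 * β3 * pdx p L t)) * a L) * b t)
        = (- ∫ t in (0:ℝ)..T, b t * (∫ x in (0:ℝ)..L, (ρ * h * pdt (pdt v) x t) * a x))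
          + ∫ t in (0:ℝ)..T, b t * ((∫ x in (0:ℝ)..L, (-(h * α1) * (pdx v x t + (pdx w x t) ^ 2 / 2) + h * γ3 * β3 * pdx p x t) * deriv a x) + g1 t * a L) := by
      rw [← intervalIntegral.integral_neg, ← intervalIntegral.integral_add
        ((by fun_prop : Continuous fun t => -(b t * (∫ x in (0:ℝ)..L, (ρ * h * pdt (pdt v) x t) * a x))).intervalIntegrable 0 T)
        ((by fun_prop : Continuous fun t => b t * ((∫ x in (0:ℝ)..L, (-(h * α1) * (pdx v x t + (pdx w x t) ^ 2 / 2) + h * γ3 * β3 * pdx p x t) * deriv a x) + g1 t * a L)).intervalIntegrable 0 T)]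
      refine intervalIntegral.integral_congr fun t _ => ?_
      have hibp := EB.ibp_x (L := L) t
        (U := fun x t => (-(h * α1) * (pdx v x t + (pdx w x t) ^ 2 / 2) + h * γ3 * β3 * pdx p x t)) (Ux := fun x t => (-(h * α1) * pdx (fun x t => pdx v x t + (pdx w x t) ^ 2 / 2) x t + h * γ3 * β3 * pdx (pdx p) x t))
        (a := a) (a' := deriv a)
        (fun x => ((((hasDerivAt_pdx hS x t).const_mul (-(h * α1))).add
          ((hasDerivAt_pdx (contDiff_pdx hp) x t).const_mul (h * γ3 * β3)))))
        (by fun_prop)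
        (fun x => (ha.differentiable (by simp) x).hasDerivAt) hdac ha0
      rw [hibp]
      have hEAsplit : (∫ x in (0:ℝ)..L, (-(ρ * h * pdt (pdt v) x t) + h * α1 * pdx (fun x t => pdx v x t + (pdx w x t) ^ 2 / 2) x t - h * γ3 * β3 * pdx (pdx p) x t) * a x)
          = (∫ x in (0:ℝ)..L, (-(ρ * h * pdt (pdt v) x t)) * a x) - ∫ x in (0:ℝ)..L, (-(h * α1) * pdx (fun x t => pdx v x t + (pdx w x t) ^ 2 / 2) x t + h * γ3 * β3 * pdx (pdx p) x t) * a x := by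
        rw [← intervalIntegral.integral_sub
          ((by fun_prop : Continuous fun x => (-(ρ * h * pdt (pdt v) x t)) * a x).intervalIntegrable 0 L)
          ((by fun_prop : Continuous fun x => (-(h * α1) * pdx (fun x t => pdx v x t + (pdx w x t) ^ 2 / 2) x t + h * γ3 * β3 * pdx (pdx p) x t) * a x).intervalIntegrable 0 L)]
        exact intervalIntegral.integral_congr fun x _ => by ring
      have hneg : (∫ x in (0:ℝ)..L, (-(ρ * h * pdt (pdt v) x t)) * a x)
          = - (∫ x in (0:ℝ)..L, (ρ * h * pdt (pdt v) x t) * a x) := by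
        rw [← intervalIntegral.integral_neg]
        exact intervalIntegral.integral_congr fun x _ => by ring
      rw [hEAsplit, hneg]
      ring
    rw [h3]
    exact hw1
  have hEA0 : ∀ t ∈ Set.Ioo (0:ℝ) T, ∀ y ∈ Set.Ioo (0:ℝ) L, (-(ρ * h * pdt (pdt v) y t) + h * α1 * pdx (fun x t => pdx v x t + (pdx w x t) ^ 2 / 2) y t - h * γ3 * β3 * pdx (pdx p) y t) = 0 := by
    intro t ht
    apply EB.flcvX hL (f := fun x => (-(ρ * h * pdt (pdt v) x t) + h * α1 * pdx (fun x t => pdx v x t + (pdx w x t) ^ 2 / 2) x t - h * γ3 * β3 * pdx (pdx p) x t)) (by fun_prop)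
    intro a ha h00 hd0 haL hdL
    have hk := key a ha h00 t ht
    rw [haL] at hk
    simpa using hk
  constructor
  · intro t ht x hx
    have h0 := hEA0 t ht x hx
    linear_combination (-1 : ℝ) * h0
  · intro t ht
    have hIcc : ∀ y ∈ Set.Icc (0:ℝ) L, (-(ρ * h * pdt (pdt v) y t) + h * α1 * pdx (fun x t => pdx v x t + (pdx w x t) ^ 2 / 2) y t - h * γ3 * β3 * pdx (pdx p) y t) = 0 :=
      EB.zero_on_Icc hL (by fun_prop) (hEA0 t ht)
    have hkey := key (fun x => x ^ 2) (contDiff_id.pow 2) (by norm_num) t ht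
    have hz : (∫ x in (0:ℝ)..L, (-(ρ * h * pdt (pdt v) x t) + h * α1 * pdx (fun x t => pdx v x t + (pdx w x t) ^ 2 / 2) x t - h * γ3 * β3 * pdx (pdx p) x t) * (fun x : ℝ => x ^ 2) x) = 0 := by
      rw [intervalIntegral.integral_congr (g := fun _ => (0:ℝ)) fun x hxI => ?_,
        intervalIntegral.integral_zero]
      rw [Set.uIcc_of_le hL.le] at hxI
      rw [hIcc x hxI, zero_mul]
    rw [hz, zero_add] at hkey
    have hL2 : ((fun x : ℝ => x ^ 2) L) = L ^ 2 := rfl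
    have hCA : (g1 t + (-(h * α1) * (pdx v L t + (pdx w L t) ^ 2 / 2) + h * γ3 * β3 * pdx p L t)) = 0 := by
      have hL2ne : (L:ℝ) ^ 2 ≠ 0 := pow_ne_zero 2 hL.ne'
      exact (mul_eq_zero.mp hkey).resolve_right hL2ne
    linear_combination (-1 : ℝ) * hCA


theorem EB.caseB (L T h μ α1 γ3 β3 : ℝ) (hL : 0 < L) (hT : 0 < T)
    (v w p : ℝ → ℝ → ℝ) (V : ℝ → ℝ)
    (hv : ContDiff ℝ (⊤ : ℕ∞) (uncurry v)) (hw : ContDiff ℝ (⊤ : ℕ∞) (uncurry w))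
    (hp : ContDiff ℝ (⊤ : ℕ∞) (uncurry p)) (hV : Continuous V)
    (HW : ∀ a b : ℝ → ℝ, ContDiff ℝ (⊤ : ℕ∞) a → ContDiff ℝ (⊤ : ℕ∞) b → a 0 = 0 → b 0 = 0 → b T = 0 →
      (∫ t in (0:ℝ)..T, (deriv b t * (∫ x in (0:ℝ)..L, (μ * h * pdt p x t) * a x)
        + b t * ((∫ x in (0:ℝ)..L, (h * γ3 * β3 * (pdx v x t + (pdx w x t) ^ 2 / 2) - h * β3 * pdx p x t) * deriv a x) + (-(V t)) * a L))) = 0) :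
    (∀ t ∈ Set.Ioo (0:ℝ) T, ∀ x ∈ Set.Ioo (0:ℝ) L,
      μ * h * pdt (pdt p) x t - β3 * h * pdx (pdx p) x t
        + γ3 * β3 * h * pdx (fun x t => pdx v x t + (pdx w x t) ^ 2 / 2) x t = 0)
    ∧ (∀ t ∈ Set.Ioo (0:ℝ) T,
      β3 * h * pdx p L t - γ3 * β3 * h * (pdx v L t + (pdx w L t) ^ 2 / 2) = -V t) := by
  have hS : ContDiff ℝ (⊤ : ℕ∞) (uncurry (fun x t => pdx v x t + (pdx w x t) ^ 2 / 2)) :=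
    (contDiff_pdx hv).add (((contDiff_pdx hw).pow 2).div_const 2)
  have cS : Continuous (uncurry (fun x t => pdx v x t + (pdx w x t) ^ 2 / 2)) := hS.continuous
  have cSx : Continuous (uncurry (pdx (fun x t => pdx v x t + (pdx w x t) ^ 2 / 2))) := (contDiff_pdx hS).continuous
  have cpt : Continuous (uncurry (pdt p)) := (contDiff_pdt hp).continuous
  have cptt : Continuous (uncurry (pdt (pdt p))) := (contDiff_pdt (contDiff_pdt hp)).continuous
  have cvx : Continuous (uncurry (pdx v)) := (contDiff_pdx hv).continuous
  have cwx : Continuous (uncurry (pdx w)) := (contDiff_pdx hw).continuous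
  have cpx : Continuous (uncurry (pdx p)) := (contDiff_pdx hp).continuous
  have cpxx : Continuous (uncurry (pdx (pdx p))) := (contDiff_pdx (contDiff_pdx hp)).continuous
  have key : ∀ a : ℝ → ℝ, ContDiff ℝ (⊤ : ℕ∞) a → a 0 = 0 → ∀ t ∈ Set.Ioo (0:ℝ) T,
      (∫ x in (0:ℝ)..L, (-(μ * h * pdt (pdt p) x t) - h * γ3 * β3 * pdx (fun x t => pdx v x t + (pdx w x t) ^ 2 / 2) x t + h * β3 * pdx (pdx p) x t) * a x) + (-V t + (h * γ3 * β3 * (pdx v L t + (pdx w L t) ^ 2 / 2) - h * β3 * pdx p L t)) * a L = 0 := by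
    intro a ha ha0
    have hac : Continuous a := ha.continuous
    have hdac : Continuous (deriv a) := (EB.contDiff_deriv ha).continuous
    apply EB.flcvT hT (by fun_prop)
    intro b hb hb0 hbT
    have hbc : Continuous b := hb.continuous
    have hdbc : Continuous (deriv b) := (EB.contDiff_deriv hb).continuous
    have hw1 := HW a b ha hb ha0 hb0 hbT
    have hint1 : IntervalIntegrable
        (fun t => deriv b t * (∫ x in (0:ℝ)..L, (μ * h * pdt p x t) * a x)) volume 0 T :=
      (by fun_prop : Continuous fun t => deriv b t * (∫ x in (0:ℝ)..L, (μ * h * pdt p x t) * a x)).intervalIntegrable 0 T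
    have hint2 : IntervalIntegrable
        (fun t => b t * ((∫ x in (0:ℝ)..L, (h * γ3 * β3 * (pdx v x t + (pdx w x t) ^ 2 / 2) - h * β3 * pdx p x t) * deriv a x) + (-(V t)) * a L)) volume 0 T :=
      (by fun_prop : Continuous fun t => b t * ((∫ x in (0:ℝ)..L, (h * γ3 * β3 * (pdx v x t + (pdx w x t) ^ 2 / 2) - h * β3 * pdx p x t) * deriv a x) + (-(V t)) * a L)).intervalIntegrable 0 T
    rw [intervalIntegral.integral_add hint1 hint2] at hw1
    have hts := EB.time_shift (L := L) (T := T) hL.le hT.le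
      (R := fun x t => μ * h * pdt p x t) (Rt := fun x t => μ * h * pdt (pdt p) x t)
      (κ := a) (B := b) (B' := deriv b)
      (by fun_prop) (by fun_prop)
      (fun x t => (hasDerivAt_pdt (contDiff_pdt hp) x t).const_mul (μ * h))
      hac (fun t => (hb.differentiable (by simp) t).hasDerivAt) hdbc hbc hb0 hbT
    rw [hts] at hw1
    have h3 : (∫ t in (0:ℝ)..T, ((∫ x in (0:ℝ)..L, (-(μ * h * pdt (pdt p) x t) - h * γ3 * β3 * pdx (fun x t => pdx v x t + (pdx w x t) ^ 2 / 2) x t + h * β3 * pdx (pdx p) x t) * a x) + (-V t + (h * γ3 * β3 * (pdx v L t + (pdx w L t) ^ 2 / 2) - h * β3 * pdx p L t)) * a L) * b t)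
        = (- ∫ t in (0:ℝ)..T, b t * (∫ x in (0:ℝ)..L, (μ * h * pdt (pdt p) x t) * a x))
          + ∫ t in (0:ℝ)..T, b t * ((∫ x in (0:ℝ)..L, (h * γ3 * β3 * (pdx v x t + (pdx w x t) ^ 2 / 2) - h * β3 * pdx p x t) * deriv a x) + (-(V t)) * a L) := by
      rw [← intervalIntegral.integral_neg, ← intervalIntegral.integral_add
        ((by fun_prop : Continuous fun t => -(b t * (∫ x in (0:ℝ)..L, (μ * h * pdt (pdt p) x t) * a x))).intervalIntegrable 0 T)
        ((by fun_prop : Continuous fun t => b t * ((∫ x in (0:ℝ)..L, (h * γ3 * β3 * (pdx v x t + (pdx w x t) ^ 2 / 2) - h * β3 * pdx p x t) * deriv a x) + (-(V t)) * a L)).intervalIntegrable 0 T)]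
      refine intervalIntegral.integral_congr fun t _ => ?_
      have hibp := EB.ibp_x (L := L) t
        (U := fun x t => (h * γ3 * β3 * (pdx v x t + (pdx w x t) ^ 2 / 2) - h * β3 * pdx p x t)) (Ux := fun x t => (h * γ3 * β3 * pdx (fun x t => pdx v x t + (pdx w x t) ^ 2 / 2) x t - h * β3 * pdx (pdx p) x t))
        (a := a) (a' := deriv a)
        (fun x => (((hasDerivAt_pdx hS x t).const_mul (h * γ3 * β3)).sub
          ((hasDerivAt_pdx (contDiff_pdx hp) x t).const_mul (h * β3))))
        (by fun_prop)
        (fun x => (ha.differentiable (by simp) x).hasDerivAt) hdac ha0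
      rw [hibp]
      have hEBsplit : (∫ x in (0:ℝ)..L, (-(μ * h * pdt (pdt p) x t) - h * γ3 * β3 * pdx (fun x t => pdx v x t + (pdx w x t) ^ 2 / 2) x t + h * β3 * pdx (pdx p) x t) * a x)
          = (∫ x in (0:ℝ)..L, (-(μ * h * pdt (pdt p) x t)) * a x) - ∫ x in (0:ℝ)..L, (h * γ3 * β3 * pdx (fun x t => pdx v x t + (pdx w x t) ^ 2 / 2) x t - h * β3 * pdx (pdx p) x t) * a x := by
        rw [← intervalIntegral.integral_sub
          ((by fun_prop : Continuous fun x => (-(μ * h * pdt (pdt p) x t)) * a x).intervalIntegrable 0 L)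
          ((by fun_prop : Continuous fun x => (h * γ3 * β3 * pdx (fun x t => pdx v x t + (pdx w x t) ^ 2 / 2) x t - h * β3 * pdx (pdx p) x t) * a x).intervalIntegrable 0 L)]
        exact intervalIntegral.integral_congr fun x _ => by ring
      have hneg : (∫ x in (0:ℝ)..L, (-(μ * h * pdt (pdt p) x t)) * a x)
          = - (∫ x in (0:ℝ)..L, (μ * h * pdt (pdt p) x t) * a x) := by
        rw [← intervalIntegral.integral_neg]
        exact intervalIntegral.integral_congr fun x _ => by ring
      rw [hEBsplit, hneg]
      ring
    rw [h3]
    exact hw1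
  have hE0 : ∀ t ∈ Set.Ioo (0:ℝ) T, ∀ y ∈ Set.Ioo (0:ℝ) L, (-(μ * h * pdt (pdt p) y t) - h * γ3 * β3 * pdx (fun x t => pdx v x t + (pdx w x t) ^ 2 / 2) y t + h * β3 * pdx (pdx p) y t) = 0 := by
    intro t ht
    apply EB.flcvX hL (f := fun x => (-(μ * h * pdt (pdt p) x t) - h * γ3 * β3 * pdx (fun x t => pdx v x t + (pdx w x t) ^ 2 / 2) x t + h * β3 * pdx (pdx p) x t)) (by fun_prop)
    intro a ha h00 hd0 haL hdL
    have hk := key a ha h00 t ht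
    rw [haL] at hk
    simpa using hk
  constructor
  · intro t ht x hx
    have h0 := hE0 t ht x hx
    linear_combination (-1 : ℝ) * h0
  · intro t ht
    have hIcc : ∀ y ∈ Set.Icc (0:ℝ) L, (-(μ * h * pdt (pdt p) y t) - h * γ3 * β3 * pdx (fun x t => pdx v x t + (pdx w x t) ^ 2 / 2) y t + h * β3 * pdx (pdx p) y t) = 0 :=
      EB.zero_on_Icc hL (by fun_prop) (hE0 t ht)
    have hkey := key (fun x => x ^ 2) (contDiff_id.pow 2) (by norm_num) t ht
    have hz : (∫ x in (0:ℝ)..L, (-(μ * h * pdt (pdt p) x t) - h * γ3 * β3 * pdx (fun x t => pdx v x t + (pdx w x t) ^ 2 / 2) x t + h * β3 * pdx (pdx p) x t) * (fun x : ℝ => x ^ 2) x) = 0 := by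
      rw [intervalIntegral.integral_congr (g := fun _ => (0:ℝ)) fun x hxI => ?_,
        intervalIntegral.integral_zero]
      rw [Set.uIcc_of_le hL.le] at hxI
      rw [hIcc x hxI, zero_mul]
    rw [hz, zero_add] at hkey
    have hL2 : ((fun x : ℝ => x ^ 2) L) = L ^ 2 := rfl
    have hCB : (-V t + (h * γ3 * β3 * (pdx v L t + (pdx w L t) ^ 2 / 2) - h * β3 * pdx p L t)) = 0 := by
      have hL2ne : (L:ℝ) ^ 2 ≠ 0 := pow_ne_zero 2 hL.ne'
      exact (mul_eq_zero.mp hkey).resolve_right hL2ne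
    linear_combination (-1 : ℝ) * hCB


theorem EB.caseC (L T h ρ α1 γ3 β3 : ℝ) (hL : 0 < L) (hT : 0 < T)
    (v w p : ℝ → ℝ → ℝ) (g m : ℝ → ℝ)
    (hv : ContDiff ℝ (⊤ : ℕ∞) (uncurry v)) (hw : ContDiff ℝ (⊤ : ℕ∞) (uncurry w))
    (hp : ContDiff ℝ (⊤ : ℕ∞) (uncurry p)) (hg : Continuous g) (hm : Continuous m)
    (HW : ∀ a b : ℝ → ℝ, ContDiff ℝ (⊤ : ℕ∞) a → ContDiff ℝ (⊤ : ℕ∞) b → a 0 = 0 → deriv a 0 = 0 →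
        b 0 = 0 → b T = 0 →
      (∫ t in (0:ℝ)..T, (deriv b t * (∫ x in (0:ℝ)..L, ((ρ * h ^ 3 / 12) * pdt (pdx w) x t) * deriv a x)
        + (deriv b t * (∫ x in (0:ℝ)..L, (ρ * h * pdt w x t) * a x)
        + b t * ((∫ x in (0:ℝ)..L, ((-(α1 * h) * (pdx v x t + (pdx w x t) ^ 2 / 2) + γ3 * β3 * h * pdx p x t) * pdx w x t) * deriv a x) + ((∫ x in (0:ℝ)..L, (-(α1 * h ^ 3 / 12) * pdx (pdx w) x t) * deriv (deriv a) x) + (g t * a L - m t * deriv a L)))))) = 0) :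
    (∀ t ∈ Set.Ioo (0:ℝ) T, ∀ x ∈ Set.Ioo (0:ℝ) L,
      ρ * h * pdt (pdt w) x t - ρ * h ^ 3 / 12 * pdx (pdx (pdt (pdt w))) x t
        + α1 * h ^ 3 / 12 * pdx (pdx (pdx (pdx w))) x t + pdx (fun y τ => (-(α1 * h) * (fun x t => pdx v x t + (pdx w x t) ^ 2 / 2) y τ + γ3 * β3 * h * pdx p y τ) * pdx w y τ) x t = 0)
    ∧ (∀ t ∈ Set.Ioo (0:ℝ) T, α1 * h ^ 3 / 12 * pdx (pdx w) L t = -m t)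
    ∧ (∀ t ∈ Set.Ioo (0:ℝ) T,
      ρ * h ^ 3 / 12 * pdx (pdt (pdt w)) L t - α1 * h ^ 3 / 12 * pdx (pdx (pdx w)) L t
        + (α1 * h * (pdx v L t + (pdx w L t) ^ 2 / 2) - γ3 * β3 * h * pdx p L t) * pdx w L t = g t) := by
  have hS : ContDiff ℝ (⊤ : ℕ∞) (uncurry (fun x t => pdx v x t + (pdx w x t) ^ 2 / 2)) :=
    (contDiff_pdx hv).add (((contDiff_pdx hw).pow 2).div_const 2)
  have hG : ContDiff ℝ (⊤ : ℕ∞) (uncurry (fun y τ => (-(α1 * h) * (fun x t => pdx v x t + (pdx w x t) ^ 2 / 2) y τ + γ3 * β3 * h * pdx p y τ) * pdx w y τ)) :=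
    ((contDiff_const.mul hS).add (contDiff_const.mul (contDiff_pdx hp))).mul (contDiff_pdx hw)
  have cS : Continuous (uncurry (fun x t => pdx v x t + (pdx w x t) ^ 2 / 2)) := hS.continuous
  have cGx : Continuous (uncurry (pdx (fun y τ => (-(α1 * h) * (fun x t => pdx v x t + (pdx w x t) ^ 2 / 2) y τ + γ3 * β3 * h * pdx p y τ) * pdx w y τ))) := (contDiff_pdx hG).continuous
  have cvx : Continuous (uncurry (pdx v)) := (contDiff_pdx hv).continuous
  have cwx : Continuous (uncurry (pdx w)) := (contDiff_pdx hw).continuous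
  have cpx : Continuous (uncurry (pdx p)) := (contDiff_pdx hp).continuous
  have cwxt : Continuous (uncurry (pdt (pdx w))) := (contDiff_pdt (contDiff_pdx hw)).continuous
  have cwt : Continuous (uncurry (pdt w)) := (contDiff_pdt hw).continuous
  have cwtt : Continuous (uncurry (pdt (pdt w))) := (contDiff_pdt (contDiff_pdt hw)).continuous
  have cw1tt : Continuous (uncurry (pdx (pdt (pdt w)))) :=
    (contDiff_pdx (contDiff_pdt (contDiff_pdt hw))).continuous
  have cw2tt : Continuous (uncurry (pdx (pdx (pdt (pdt w))))) :=
    (contDiff_pdx (contDiff_pdx (contDiff_pdt (contDiff_pdt hw)))).continuous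
  have cw2 : Continuous (uncurry (pdx (pdx w))) := (contDiff_pdx (contDiff_pdx hw)).continuous
  have cw3 : Continuous (uncurry (pdx (pdx (pdx w)))) :=
    (contDiff_pdx (contDiff_pdx (contDiff_pdx hw))).continuous
  have cw4 : Continuous (uncurry (pdx (pdx (pdx (pdx w))))) :=
    (contDiff_pdx (contDiff_pdx (contDiff_pdx (contDiff_pdx hw)))).continuous
  have hcm : pdt (pdt (pdx w)) = pdx (pdt (pdt w)) := by
    rw [pdx_pdt_comm (contDiff_pdt hw), pdx_pdt_comm hw]
  have key : ∀ a : ℝ → ℝ, ContDiff ℝ (⊤ : ℕ∞) a → a 0 = 0 → deriv a 0 = 0 →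
      ∀ t ∈ Set.Ioo (0:ℝ) T,
      (∫ x in (0:ℝ)..L, (((ρ * h ^ 3 / 12) * pdx (pdx (pdt (pdt w))) x t) - (ρ * h * pdt (pdt w) x t) - pdx (fun y τ => (-(α1 * h) * (fun x t => pdx v x t + (pdx w x t) ^ 2 / 2) y τ + γ3 * β3 * h * pdx p y τ) * pdx w y τ) x t + (-(α1 * h ^ 3 / 12) * pdx (pdx (pdx (pdx w))) x t)) * a x) + (-((ρ * h ^ 3 / 12) * pdx (pdt (pdt w)) L t) + ((-(α1 * h) * (pdx v L t + (pdx w L t) ^ 2 / 2) + γ3 * β3 * h * pdx p L t) * pdx w L t) - (-(α1 * h ^ 3 / 12) * pdx (pdx (pdx w)) L t) + g t) * a L + ((-(α1 * h ^ 3 / 12) * pdx (pdx w) L t) - m t) * deriv a L = 0 := by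
    intro a ha ha0 hda0
    have hac : Continuous a := ha.continuous
    have hdac : Continuous (deriv a) := (EB.contDiff_deriv ha).continuous
    have hddac : Continuous (deriv (deriv a)) :=
      (EB.contDiff_deriv (EB.contDiff_deriv ha)).continuous
    apply EB.flcvT hT (by fun_prop)
    intro b hb hb0 hbT
    have hbc : Continuous b := hb.continuous
    have hdbc : Continuous (deriv b) := (EB.contDiff_deriv hb).continuous
    have hw1 := HW a b ha hb ha0 hda0 hb0 hbT
    have hint1 : IntervalIntegrable
        (fun t => deriv b t * (∫ x in (0:ℝ)..L, ((ρ * h ^ 3 / 12) * pdt (pdx w) x t) * deriv a x)) volume 0 T :=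
      (by fun_prop : Continuous fun t => deriv b t * (∫ x in (0:ℝ)..L, ((ρ * h ^ 3 / 12) * pdt (pdx w) x t) * deriv a x)).intervalIntegrable 0 T
    have hint2 : IntervalIntegrable
        (fun t => deriv b t * (∫ x in (0:ℝ)..L, (ρ * h * pdt w x t) * a x)) volume 0 T :=
      (by fun_prop : Continuous fun t => deriv b t * (∫ x in (0:ℝ)..L, (ρ * h * pdt w x t) * a x)).intervalIntegrable 0 T
    have hint3 : IntervalIntegrable (fun t => b t * ((∫ x in (0:ℝ)..L, ((-(α1 * h) * (pdx v x t + (pdx w x t) ^ 2 / 2) + γ3 * β3 * h * pdx p x t) * pdx w x t) * deriv a x) + ((∫ x in (0:ℝ)..L, (-(α1 * h ^ 3 / 12) * pdx (pdx w) x t) * deriv (deriv a) x) + (g t * a L - m t * deriv a L)))) volume 0 T :=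
      (by fun_prop : Continuous fun t => b t * ((∫ x in (0:ℝ)..L, ((-(α1 * h) * (pdx v x t + (pdx w x t) ^ 2 / 2) + γ3 * β3 * h * pdx p x t) * pdx w x t) * deriv a x) + ((∫ x in (0:ℝ)..L, (-(α1 * h ^ 3 / 12) * pdx (pdx w) x t) * deriv (deriv a) x) + (g t * a L - m t * deriv a L)))).intervalIntegrable 0 T
    rw [intervalIntegral.integral_add hint1 (hint2.add hint3),
      intervalIntegral.integral_add hint2 hint3] at hw1
    have hRd1 : ∀ x t : ℝ, HasDerivAt (fun τ => ((ρ * h ^ 3 / 12) * pdt (pdx w) x τ)) (((ρ * h ^ 3 / 12) * pdx (pdt (pdt w)) x t)) t := by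
      intro x t
      have hh := (hasDerivAt_pdt (contDiff_pdt (contDiff_pdx hw)) x t).const_mul (ρ * h ^ 3 / 12)
      rw [hcm] at hh
      exact hh
    have hts1 := EB.time_shift (L := L) (T := T) hL.le hT.le
      (R := fun x t => ((ρ * h ^ 3 / 12) * pdt (pdx w) x t)) (Rt := fun x t => ((ρ * h ^ 3 / 12) * pdx (pdt (pdt w)) x t))
      (κ := deriv a) (B := b) (B' := deriv b)
      (by fun_prop) (by fun_prop) hRd1
      hdac (fun t => (hb.differentiable (by simp) t).hasDerivAt) hdbc hbc hb0 hbT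
    have hts2 := EB.time_shift (L := L) (T := T) hL.le hT.le
      (R := fun x t => (ρ * h * pdt w x t)) (Rt := fun x t => (ρ * h * pdt (pdt w) x t))
      (κ := a) (B := b) (B' := deriv b)
      (by fun_prop) (by fun_prop)
      (fun x t => (hasDerivAt_pdt (contDiff_pdt hw) x t).const_mul (ρ * h))
      hac (fun t => (hb.differentiable (by simp) t).hasDerivAt) hdbc hbc hb0 hbT
    rw [hts1, hts2] at hw1
    have h3 : (∫ t in (0:ℝ)..T, ((∫ x in (0:ℝ)..L, (((ρ * h ^ 3 / 12) * pdx (pdx (pdt (pdt w))) x t) - (ρ * h * pdt (pdt w) x t) - pdx (fun y τ => (-(α1 * h) * (fun x t => pdx v x t + (pdx w x t) ^ 2 / 2) y τ + γ3 * β3 * h * pdx p y τ) * pdx w y τ) x t + (-(α1 * h ^ 3 / 12) * pdx (pdx (pdx (pdx w))) x t)) * a x) + (-((ρ * h ^ 3 / 12) * pdx (pdt (pdt w)) L t) + ((-(α1 * h) * (pdx v L t + (pdx w L t) ^ 2 / 2) + γ3 * β3 * h * pdx p L t) * pdx w L t) - (-(α1 * h ^ 3 / 12) * pdx (pdx (pdx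 w)) L t) + g t) * a L + ((-(α1 * h ^ 3 / 12) * pdx (pdx w) L t) - m t) * deriv a L) * b t)
        = (- ∫ t in (0:ℝ)..T, b t * (∫ x in (0:ℝ)..L, ((ρ * h ^ 3 / 12) * pdx (pdt (pdt w)) x t) * deriv a x))
          + ((- ∫ t in (0:ℝ)..T, b t * (∫ x in (0:ℝ)..L, (ρ * h * pdt (pdt w) x t) * a x))
          + ∫ t in (0:ℝ)..T, b t * ((∫ x in (0:ℝ)..L, ((-(α1 * h) * (pdx v x t + (pdx w x t) ^ 2 / 2) + γ3 * β3 * h * pdx p x t) * pdx w x t) * deriv a x) + ((∫ x in (0:ℝ)..L, (-(α1 * h ^ 3 / 12) * pdx (pdx w) x t) * deriv (deriv a) x) + (g t * a L - m t * deriv a L)))) := by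
      rw [← intervalIntegral.integral_neg, ← intervalIntegral.integral_neg,
        ← intervalIntegral.integral_add
          ((by fun_prop : Continuous fun t => -(b t * (∫ x in (0:ℝ)..L, (ρ * h * pdt (pdt w) x t) * a x))).intervalIntegrable 0 T)
          ((by fun_prop : Continuous fun t => b t * ((∫ x in (0:ℝ)..L, ((-(α1 * h) * (pdx v x t + (pdx w x t) ^ 2 / 2) + γ3 * β3 * h * pdx p x t) * pdx w x t) * deriv a x) + ((∫ x in (0:ℝ)..L, (-(α1 * h ^ 3 / 12) * pdx (pdx w) x t) * deriv (deriv a) x) + (g t * a L - m t * deriv a L)))).intervalIntegrable 0 T),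
        ← intervalIntegral.integral_add
          ((by fun_prop : Continuous fun t => -(b t * (∫ x in (0:ℝ)..L, ((ρ * h ^ 3 / 12) * pdx (pdt (pdt w)) x t) * deriv a x))).intervalIntegrable 0 T)
          ((by fun_prop : Continuous fun t => (-(b t * (∫ x in (0:ℝ)..L, (ρ * h * pdt (pdt w) x t) * a x)) + b t * ((∫ x in (0:ℝ)..L, ((-(α1 * h) * (pdx v x t + (pdx w x t) ^ 2 / 2) + γ3 * β3 * h * pdx p x t) * pdx w x t) * deriv a x) + ((∫ x in (0:ℝ)..L, (-(α1 * h ^ 3 / 12) * pdx (pdx w) x t) * deriv (deriv a) x) + (g t * a L - m t * deriv a L))))).intervalIntegrable 0 T)]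
      refine intervalIntegral.integral_congr fun t _ => ?_
      have hibp1 := EB.ibp_x (L := L) t
        (U := fun x t => ((ρ * h ^ 3 / 12) * pdx (pdt (pdt w)) x t)) (Ux := fun x t => ((ρ * h ^ 3 / 12) * pdx (pdx (pdt (pdt w))) x t))
        (a := a) (a' := deriv a)
        (fun x => (hasDerivAt_pdx (contDiff_pdx (contDiff_pdt (contDiff_pdt hw))) x t).const_mul (ρ * h ^ 3 / 12))
        (by fun_prop)
        (fun x => (ha.differentiable (by simp) x).hasDerivAt) hdac ha0
      have hibpG := EB.ibp_x (L := L) t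
        (U := (fun y τ => (-(α1 * h) * (fun x t => pdx v x t + (pdx w x t) ^ 2 / 2) y τ + γ3 * β3 * h * pdx p y τ) * pdx w y τ)) (Ux := fun x t => pdx (fun y τ => (-(α1 * h) * (fun x t => pdx v x t + (pdx w x t) ^ 2 / 2) y τ + γ3 * β3 * h * pdx p y τ) * pdx w y τ) x t)
        (a := a) (a' := deriv a)
        (fun x => hasDerivAt_pdx hG x t)
        (by fun_prop)
        (fun x => (ha.differentiable (by simp) x).hasDerivAt) hdac ha0
      have hibp4a := EB.ibp_x (L := L) t
        (U := fun x t => (-(α1 * h ^ 3 / 12) * pdx (pdx w) x t)) (Ux := fun x t => (-(α1 * h ^ 3 / 12) * pdx (pdx (pdx w)) x t))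
        (a := deriv a) (a' := deriv (deriv a))
        (fun x => (hasDerivAt_pdx (contDiff_pdx (contDiff_pdx hw)) x t).const_mul (-(α1 * h ^ 3 / 12)))
        (by fun_prop)
        (fun x => ((EB.contDiff_deriv ha).differentiable (by simp) x).hasDerivAt) hddac hda0
      have hibp4b := EB.ibp_x (L := L) t
        (U := fun x t => (-(α1 * h ^ 3 / 12) * pdx (pdx (pdx w)) x t)) (Ux := fun x t => (-(α1 * h ^ 3 / 12) * pdx (pdx (pdx (pdx w))) x t))
        (a := a) (a' := deriv a)
        (fun x => (hasDerivAt_pdx (contDiff_pdx (contDiff_pdx (contDiff_pdx hw))) x t).const_mul (-(α1 * h ^ 3 / 12)))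
        (by fun_prop)
        (fun x => (ha.differentiable (by simp) x).hasDerivAt) hdac ha0
      have hECsplit : (∫ x in (0:ℝ)..L, (((ρ * h ^ 3 / 12) * pdx (pdx (pdt (pdt w))) x t) - (ρ * h * pdt (pdt w) x t) - pdx (fun y τ => (-(α1 * h) * (fun x t => pdx v x t + (pdx w x t) ^ 2 / 2) y τ + γ3 * β3 * h * pdx p y τ) * pdx w y τ) x t + (-(α1 * h ^ 3 / 12) * pdx (pdx (pdx (pdx w))) x t)) * a x)
          = (((∫ x in (0:ℝ)..L, ((ρ * h ^ 3 / 12) * pdx (pdx (pdt (pdt w))) x t) * a x) - (∫ x in (0:ℝ)..L, (ρ * h * pdt (pdt w) x t) * a x))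
            - (∫ x in (0:ℝ)..L, pdx (fun y τ => (-(α1 * h) * (fun x t => pdx v x t + (pdx w x t) ^ 2 / 2) y τ + γ3 * β3 * h * pdx p y τ) * pdx w y τ) x t * a x)) + (∫ x in (0:ℝ)..L, (-(α1 * h ^ 3 / 12) * pdx (pdx (pdx (pdx w))) x t) * a x) := by
        rw [← intervalIntegral.integral_sub
            ((by fun_prop : Continuous fun x => ((ρ * h ^ 3 / 12) * pdx (pdx (pdt (pdt w))) x t) * a x).intervalIntegrable 0 L)
            ((by fun_prop : Continuous fun x => (ρ * h * pdt (pdt w) x t) * a x).intervalIntegrable 0 L),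
          ← intervalIntegral.integral_sub
            ((by fun_prop : Continuous fun x => (((ρ * h ^ 3 / 12) * pdx (pdx (pdt (pdt w))) x t) * a x - (ρ * h * pdt (pdt w) x t) * a x)).intervalIntegrable 0 L)
            ((by fun_prop : Continuous fun x => pdx (fun y τ => (-(α1 * h) * (fun x t => pdx v x t + (pdx w x t) ^ 2 / 2) y τ + γ3 * β3 * h * pdx p y τ) * pdx w y τ) x t * a x).intervalIntegrable 0 L),
          ← intervalIntegral.integral_add
            ((by fun_prop : Continuous fun x => (((ρ * h ^ 3 / 12) * pdx (pdx (pdt (pdt w))) x t) * a x - (ρ * h * pdt (pdt w) x t) * a x - pdx (fun y τ => (-(α1 * h) * (fun x t => pdx v x t + (pdx w x t) ^ 2 / 2) y τ + γ3 * β3 * h * pdx p y τ) * pdx w y τ) x t * a x)).intervalIntegrable 0 L)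
            ((by fun_prop : Continuous fun x => (-(α1 * h ^ 3 / 12) * pdx (pdx (pdx (pdx w))) x t) * a x).intervalIntegrable 0 L)]
        exact intervalIntegral.integral_congr fun x _ => by ring
      rw [hibp1, hibpG, hibp4a, hibp4b, hECsplit]
      ring
    rw [h3]
    exact hw1
  have hEC0 : ∀ t ∈ Set.Ioo (0:ℝ) T, ∀ y ∈ Set.Ioo (0:ℝ) L, (((ρ * h ^ 3 / 12) * pdx (pdx (pdt (pdt w))) y t) - (ρ * h * pdt (pdt w) y t) - pdx (fun y τ => (-(α1 * h) * (fun x t => pdx v x t + (pdx w x t) ^ 2 / 2) y τ + γ3 * β3 * h * pdx p y τ) * pdx w y τ) y t + (-(α1 * h ^ 3 / 12) * pdx (pdx (pdx (pdx w))) y t)) = 0 := by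
    intro t ht
    apply EB.flcvX hL (f := fun x => (((ρ * h ^ 3 / 12) * pdx (pdx (pdt (pdt w))) x t) - (ρ * h * pdt (pdt w) x t) - pdx (fun y τ => (-(α1 * h) * (fun x t => pdx v x t + (pdx w x t) ^ 2 / 2) y τ + γ3 * β3 * h * pdx p y τ) * pdx w y τ) x t + (-(α1 * h ^ 3 / 12) * pdx (pdx (pdx (pdx w))) x t))) (by fun_prop)
    intro a ha h00 hd0 haL hdL
    have hk := key a ha h00 hd0 t ht
    rw [haL, hdL] at hk
    simpa using hk
  have hd2 : deriv (fun x : ℝ => x ^ 2) = fun x : ℝ => 2 * x := by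
    funext x
    simpa using (hasDerivAt_pow 2 x).deriv
  have hd3 : deriv (fun x : ℝ => x ^ 3) = fun x : ℝ => 3 * x ^ 2 := by
    funext x
    simpa using (hasDerivAt_pow 3 x).deriv
  have hbd : ∀ t ∈ Set.Ioo (0:ℝ) T, ((-(α1 * h ^ 3 / 12) * pdx (pdx w) L t) - m t) = 0 ∧ (-((ρ * h ^ 3 / 12) * pdx (pdt (pdt w)) L t) + ((-(α1 * h) * (pdx v L t + (pdx w L t) ^ 2 / 2) + γ3 * β3 * h * pdx p L t) * pdx w L t) - (-(α1 * h ^ 3 / 12) * pdx (pdx (pdx w)) L t) + g t) = 0 := by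
    intro t ht
    have hIcc : ∀ y ∈ Set.Icc (0:ℝ) L, (((ρ * h ^ 3 / 12) * pdx (pdx (pdt (pdt w))) y t) - (ρ * h * pdt (pdt w) y t) - pdx (fun y τ => (-(α1 * h) * (fun x t => pdx v x t + (pdx w x t) ^ 2 / 2) y τ + γ3 * β3 * h * pdx p y τ) * pdx w y τ) y t + (-(α1 * h ^ 3 / 12) * pdx (pdx (pdx (pdx w))) y t)) = 0 :=
      EB.zero_on_Icc hL (by fun_prop) (hEC0 t ht)
    have hz : ∀ aa : ℝ → ℝ, (∫ x in (0:ℝ)..L, (((ρ * h ^ 3 / 12) * pdx (pdx (pdt (pdt w))) x t) - (ρ * h * pdt (pdt w) x t) - pdx (fun y τ => (-(α1 * h) * (fun x t => pdx v x t + (pdx w x t) ^ 2 / 2) y τ + γ3 * β3 * h * pdx p y τ) * pdx w y τ) x t + (-(α1 * h ^ 3 / 12) * pdx (pdx (pdx (pdx w))) x t)) * aa x) = 0 := by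
      intro aa
      rw [intervalIntegral.integral_congr (g := fun _ => (0:ℝ)) fun x hxI => ?_,
        intervalIntegral.integral_zero]
      rw [Set.uIcc_of_le hL.le] at hxI
      rw [hIcc x hxI, zero_mul]
    have hk2 := key (fun x => x ^ 2) (contDiff_id.pow 2) (by norm_num)
      (by rw [hd2]; norm_num) t ht
    rw [hz, hd2] at hk2
    have e1 : ((fun x : ℝ => x ^ 2) L) = L ^ 2 := rfl
    have e2 : ((fun x : ℝ => 2 * x) L) = 2 * L := rfl
    simp only [e1, e2, zero_add] at hk2
    have hk3 := key (fun x => x ^ 3) (contDiff_id.pow 3) (by norm_num)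
      (by rw [hd3]; norm_num) t ht
    rw [hz, hd3] at hk3
    have e3 : ((fun x : ℝ => x ^ 3) L) = L ^ 3 := rfl
    have e4 : ((fun x : ℝ => 3 * x ^ 2) L) = 3 * L ^ 2 := rfl
    simp only [e3, e4, zero_add] at hk3
    have hL2ne : (L:ℝ) ^ 2 ≠ 0 := pow_ne_zero 2 hL.ne'
    have hBC : ((-(α1 * h ^ 3 / 12) * pdx (pdx w) L t) - m t) = 0 := by
      have hh : L ^ 2 * ((-(α1 * h ^ 3 / 12) * pdx (pdx w) L t) - m t) = 0 := by linear_combination hk3 - L * hk2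
      rcases mul_eq_zero.mp hh with hcase | hcase
      · exact absurd hcase hL2ne
      · exact hcase
    have hAC : (-((ρ * h ^ 3 / 12) * pdx (pdt (pdt w)) L t) + ((-(α1 * h) * (pdx v L t + (pdx w L t) ^ 2 / 2) + γ3 * β3 * h * pdx p L t) * pdx w L t) - (-(α1 * h ^ 3 / 12) * pdx (pdx (pdx w)) L t) + g t) = 0 := by
      have hh : L ^ 2 * (-((ρ * h ^ 3 / 12) * pdx (pdt (pdt w)) L t) + ((-(α1 * h) * (pdx v L t + (pdx w L t) ^ 2 / 2) + γ3 * β3 * h * pdx p L t) * pdx w L t) - (-(α1 * h ^ 3 / 12) * pdx (pdx (pdx w)) L t) + g t) = 0 := by linear_combination hk2 - 2 * L * hBC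
      rcases mul_eq_zero.mp hh with hcase | hcase
      · exact absurd hcase hL2ne
      · exact hcase
    exact ⟨hBC, hAC⟩
  refine ⟨?_, ?_, ?_⟩
  · intro t ht x hx
    have h0 := hEC0 t ht x hx
    linear_combination (-1 : ℝ) * h0
  · intro t ht
    have h0 := (hbd t ht).1
    linear_combination (-1 : ℝ) * h0
  · intro t ht
    have h0 := (hbd t ht).2
    linear_combination (-1 : ℝ) * h0


/-- Hamilton's principle yields the fully dynamic nonlinear Euler–Bernoulli
piezoelectric beam equations together with the natural boundary conditions at
`x = L`. Here `s = v_x + ½w_x²` is the membrane strain. -/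
theorem hamilton_principle_EB
    (L T h ρ α11 β3 μ γ3 α1 : ℝ)
    (hL : 0 < L) (hT : 0 < T) (hh : 0 < h) (hρ : 0 < ρ)
    (hβ3 : 0 < β3) (hμ : 0 < μ)
    (hα1 : α1 = α11 + γ3 ^ 2 * β3)
    (v w p s : ℝ → ℝ → ℝ) (V g1 g m : ℝ → ℝ)
    (hv : ContDiff ℝ (⊤ : ℕ∞) (Function.uncurry v))
    (hw : ContDiff ℝ (⊤ : ℕ∞) (Function.uncurry w))
    (hp : ContDiff ℝ (⊤ : ℕ∞) (Function.uncurry p))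
    (hV : Continuous V) (hg1 : Continuous g1) (hg : Continuous g)
    (hm : Continuous m)
    (hclamped : ∀ t, v 0 t = 0 ∧ w 0 t = 0 ∧ pdx w 0 t = 0 ∧ p 0 t = 0)
    (hs : ∀ x t, s x t = pdx v x t + (pdx w x t) ^ 2 / 2)
    (hvar : ∀ φ η q : ℝ → ℝ → ℝ,
      ContDiff ℝ (⊤ : ℕ∞) (Function.uncurry φ) →
      ContDiff ℝ (⊤ : ℕ∞) (Function.uncurry η) →
      ContDiff ℝ (⊤ : ℕ∞) (Function.uncurry q) →
      (∀ x, φ x 0 = 0 ∧ φ x T = 0 ∧ η x 0 = 0 ∧ η x T = 0 ∧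
        q x 0 = 0 ∧ q x T = 0) →
      (∀ t, φ 0 t = 0 ∧ η 0 t = 0 ∧ pdx η 0 t = 0 ∧ q 0 t = 0) →
      deriv (fun ε => actionEB L T h ρ α1 γ3 β3 μ V g1 g m
        (fun x t => v x t + ε * φ x t)
        (fun x t => w x t + ε * η x t)
        (fun x t => p x t + ε * q x t)) 0 = 0) :
    (∀ t ∈ Set.Ioo (0:ℝ) T, ∀ x ∈ Set.Ioo (0:ℝ) L,
      ρ * h * pdt (pdt v) x t - α1 * h * pdx s x t
        + γ3 * β3 * h * pdx (pdx p) x t = 0) ∧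
    (∀ t ∈ Set.Ioo (0:ℝ) T, ∀ x ∈ Set.Ioo (0:ℝ) L,
      μ * h * pdt (pdt p) x t - β3 * h * pdx (pdx p) x t
        + γ3 * β3 * h * pdx s x t = 0) ∧
    (∀ t ∈ Set.Ioo (0:ℝ) T, ∀ x ∈ Set.Ioo (0:ℝ) L,
      ρ * h * pdt (pdt w) x t - (ρ * h ^ 3 / 12) * pdx (pdx (pdt (pdt w))) x t
        + (α1 * h ^ 3 / 12) * pdx (pdx (pdx (pdx w))) x t
        + pdx (fun y τ => (-(α1 * h) * s y τ + γ3 * β3 * h * pdx p y τ)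
            * pdx w y τ) x t = 0) ∧
    (∀ t ∈ Set.Ioo (0:ℝ) T,
      (α1 * h ^ 3 / 12) * pdx (pdx w) L t = -m t) ∧
    (∀ t ∈ Set.Ioo (0:ℝ) T,
      α1 * h * s L t - γ3 * β3 * h * pdx p L t = g1 t) ∧
    (∀ t ∈ Set.Ioo (0:ℝ) T,
      β3 * h * pdx p L t - γ3 * β3 * h * s L t = -V t) ∧
    (∀ t ∈ Set.Ioo (0:ℝ) T,
      (ρ * h ^ 3 / 12) * pdx (pdt (pdt w)) L t
        - (α1 * h ^ 3 / 12) * pdx (pdx (pdx w)) L t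
        + (α1 * h * s L t - γ3 * β3 * h * pdx p L t) * pdx w L t = g t) := by
  have hsf : s = fun x t => pdx v x t + (pdx w x t) ^ 2 / 2 :=
    funext fun x => funext fun t => hs x t
  subst hsf
  have HWA : ∀ a b : ℝ → ℝ, ContDiff ℝ (⊤ : ℕ∞) a → ContDiff ℝ (⊤ : ℕ∞) b → a 0 = 0 →
      b 0 = 0 → b T = 0 → (∫ t in (0:ℝ)..T, (deriv b t * (∫ x in (0:ℝ)..L, (ρ * h * pdt v x t) * a x) + b t * ((∫ x in (0:ℝ)..L, (-(h * α1) * (pdx v x t + (pdx w x t) ^ 2 / 2) + h * γ3 * β3 * pdx p x t) * deriv a x) + g1 t * a L))) = 0 := by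
    intro a b ha hb ha0 hb0 hbT
    have hφ := EB.contDiff_prod ha hb
    have hfv := EB.firstVariation L T h ρ α1 γ3 β3 μ V g1 g m v w p
      (fun x t => a x * b t) (fun x t => (0:ℝ)) (fun x t => (0:ℝ))
      hv hw hp hφ EB.contDiff_zero2 EB.contDiff_zero2 hV hg1 hg hm
    have hd := hvar (fun x t => a x * b t) (fun x t => (0:ℝ)) (fun x t => (0:ℝ))
      hφ EB.contDiff_zero2 EB.contDiff_zero2
      (fun x => ⟨by simp [hb0], by simp [hbT], rfl, rfl, rfl, rfl⟩)
      (fun t => ⟨by simp [ha0], rfl, by simp [EB.pdx_zero], rfl⟩)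
    have hC1 := hfv.deriv.symm.trans hd
    have heq : (∫ t in (0:ℝ)..T, ((ρ * h / 2) * (∫ x in (0:ℝ)..L, (2 * (pdt v x t * pdt (fun x t => a x * b t) x t + h ^ 2 / 12 * (pdt (pdx w) x t * pdt (pdx (fun x t => (0:ℝ))) x t) + pdt w x t * pdt (fun x t => (0:ℝ)) x t))) - (h / 2) * (∫ x in (0:ℝ)..L, (2 * (α1 * ((pdx v x t + (pdx w x t) ^ 2 / 2) * (pdx (fun x t => a x * b t) x t + pdx w x t * pdx (fun x t => (0:ℝ)) x t) + h ^ 2 / 12 * (pdx (pdx w) x t * pdx (pdx (fun x t => (0:ℝ))) x t)) - γ3 * β3 * ((pdx (fun x t => a x * b t) x t + pdx w x t * pdx (fun x t => (0:ℝ)) x t) * pdx p x t + (pdx v x t + (pdx w x t) ^ 2 / 2) * pdx (fun x t => (0:ℝ)) x t) + β3 * (pdx p x t * pdx (fun x t => (0:ℝ)) x t)))) + (μ * h / 2) * (∫ x in (0:ℝ)..L, (2 * (pdt p x t * pdt (fun x t => (0:ℝ)) x t))) - V t * 0 + g1 t * (a L * b t) + g t * 0 - m t * pdx (fun x t => (0:ℝ))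 L t)) = (∫ t in (0:ℝ)..T, (deriv b t * (∫ x in (0:ℝ)..L, (ρ * h * pdt v x t) * a x) + b t * ((∫ x in (0:ℝ)..L, (-(h * α1) * (pdx v x t + (pdx w x t) ^ 2 / 2) + h * γ3 * β3 * pdx p x t) * deriv a x) + g1 t * a L))) := by
      refine intervalIntegral.integral_congr fun t _ => ?_
      simp only [EB.pdt_prod (hb.differentiable (by simp)), EB.pdx_prod ha,
        EB.pdx_zero, EB.pdt_zero]
      have iK : (∫ x in (0:ℝ)..L, (2 * (pdt v x t * (a x * deriv b t) + h ^ 2 / 12 * (pdt (pdx w) x t * 0) + pdt w x t * 0))) = deriv b t * (2 * (∫ x in (0:ℝ)..L, pdt v x t * a x)) := by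
        rw [← intervalIntegral.integral_const_mul, ← intervalIntegral.integral_const_mul]
        exact intervalIntegral.integral_congr fun x _ => by ring
      have iP : (∫ x in (0:ℝ)..L, (2 * (α1 * ((pdx v x t + (pdx w x t) ^ 2 / 2) * (deriv a x * b t + pdx w x t * 0) + h ^ 2 / 12 * (pdx (pdx w) x t * 0)) - γ3 * β3 * ((deriv a x * b t + pdx w x t * 0) * pdx p x t + (pdx v x t + (pdx w x t) ^ 2 / 2) * 0) + β3 * (pdx p x t * 0)))) = b t * (2 * (∫ x in (0:ℝ)..L, (α1 * (pdx v x t + (pdx w x t) ^ 2 / 2) - γ3 * β3 * pdx p x t) * deriv a x)) := by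
        rw [← intervalIntegral.integral_const_mul, ← intervalIntegral.integral_const_mul]
        exact intervalIntegral.integral_congr fun x _ => by ring
      have iM : (∫ x in (0:ℝ)..L, (2 * (pdt p x t * 0))) = 0 := by
        rw [intervalIntegral.integral_congr (g := fun _ => (0:ℝ)) fun x _ => by ring,
          intervalIntegral.integral_zero]
      have iC1 : (∫ x in (0:ℝ)..L, (ρ * h * pdt v x t) * a x) = ρ * h * (∫ x in (0:ℝ)..L, pdt v x t * a x) := by
        rw [← intervalIntegral.integral_const_mul]
        exact intervalIntegral.integral_congr fun x _ => by ring
      have iC2 : (∫ x in (0:ℝ)..L, (-(h * α1) * (pdx v x t + (pdx w x t) ^ 2 / 2) + h * γ3 * β3 * pdx p x t) * deriv a x) = (-h) * (∫ x in (0:ℝ)..L, (α1 * (pdx v x t + (pdx w x t) ^ 2 / 2) - γ3 * β3 * pdx p x t) * deriv a x) := by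
        rw [← intervalIntegral.integral_const_mul]
        exact intervalIntegral.integral_congr fun x _ => by ring
      rw [iK, iP, iM, iC1, iC2]
      ring
    rw [← heq]
    exact hC1
  have HWB : ∀ a b : ℝ → ℝ, ContDiff ℝ (⊤ : ℕ∞) a → ContDiff ℝ (⊤ : ℕ∞) b → a 0 = 0 →
      b 0 = 0 → b T = 0 → (∫ t in (0:ℝ)..T, (deriv b t * (∫ x in (0:ℝ)..L, (μ * h * pdt p x t) * a x) + b t * ((∫ x in (0:ℝ)..L, (h * γ3 * β3 * (pdx v x t + (pdx w x t) ^ 2 / 2) - h * β3 * pdx p x t) * deriv a x) + (-(V t)) * a L))) = 0 := by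
    intro a b ha hb ha0 hb0 hbT
    have hφ := EB.contDiff_prod ha hb
    have hfv := EB.firstVariation L T h ρ α1 γ3 β3 μ V g1 g m v w p
      (fun x t => (0:ℝ)) (fun x t => (0:ℝ)) (fun x t => a x * b t)
      hv hw hp EB.contDiff_zero2 EB.contDiff_zero2 hφ hV hg1 hg hm
    have hd := hvar (fun x t => (0:ℝ)) (fun x t => (0:ℝ)) (fun x t => a x * b t)
      EB.contDiff_zero2 EB.contDiff_zero2 hφ
      (fun x => ⟨rfl, rfl, rfl, rfl, by simp [hb0], by simp [hbT]⟩)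
      (fun t => ⟨rfl, rfl, by simp [EB.pdx_zero], by simp [ha0]⟩)
    have hC1 := hfv.deriv.symm.trans hd
    have heq : (∫ t in (0:ℝ)..T, ((ρ * h / 2) * (∫ x in (0:ℝ)..L, (2 * (pdt v x t * pdt (fun x t => (0:ℝ)) x t + h ^ 2 / 12 * (pdt (pdx w) x t * pdt (pdx (fun x t => (0:ℝ))) x t) + pdt w x t * pdt (fun x t => (0:ℝ)) x t))) - (h / 2) * (∫ x in (0:ℝ)..L, (2 * (α1 * ((pdx v x t + (pdx w x t) ^ 2 / 2) * (pdx (fun x t => (0:ℝ)) x t + pdx w x t * pdx (fun x t => (0:ℝ)) x t) + h ^ 2 / 12 * (pdx (pdx w) x t * pdx (pdx (fun x t => (0:ℝ))) x t)) - γ3 * β3 * ((pdx (fun x t => (0:ℝ)) x t + pdx w x t * pdx (fun x t => (0:ℝ)) x t) * pdx p x t + (pdx v x t + (pdx w x t) ^ 2 / 2) * pdx (fun x t => a x * b t) x t) + β3 * (pdx p x t * pdx (fun x t => a x * b t) x t)))) + (μ * h / 2) * (∫ x in (0:ℝ)..L, (2 * (pdt p x t * pdt (fun x t => a x * b t) x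 t))) - V t * (a L * b t) + g1 t * 0 + g t * 0 - m t * pdx (fun x t => (0:ℝ)) L t)) = (∫ t in (0:ℝ)..T, (deriv b t * (∫ x in (0:ℝ)..L, (μ * h * pdt p x t) * a x) + b t * ((∫ x in (0:ℝ)..L, (h * γ3 * β3 * (pdx v x t + (pdx w x t) ^ 2 / 2) - h * β3 * pdx p x t) * deriv a x) + (-(V t)) * a L))) := by
      refine intervalIntegral.integral_congr fun t _ => ?_
      simp only [EB.pdt_prod (hb.differentiable (by simp)), EB.pdx_prod ha,
        EB.pdx_zero, EB.pdt_zero]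
      have iK : (∫ x in (0:ℝ)..L, (2 * (pdt v x t * 0 + h ^ 2 / 12 * (pdt (pdx w) x t * 0) + pdt w x t * 0))) = 0 := by
        rw [intervalIntegral.integral_congr (g := fun _ => (0:ℝ)) fun x _ => by ring,
          intervalIntegral.integral_zero]
      have iP : (∫ x in (0:ℝ)..L, (2 * (α1 * ((pdx v x t + (pdx w x t) ^ 2 / 2) * (0 + pdx w x t * 0) + h ^ 2 / 12 * (pdx (pdx w) x t * 0)) - γ3 * β3 * ((0 + pdx w x t * 0) * pdx p x t + (pdx v x t + (pdx w x t) ^ 2 / 2) * (deriv a x * b t)) + β3 * (pdx p x t * (deriv a x * b t))))) = b t * (2 * (∫ x in (0:ℝ)..L, (β3 * pdx p x t - γ3 * β3 * (pdx v x t + (pdx w x t) ^ 2 / 2)) * deriv a x)) := by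
        rw [← intervalIntegral.integral_const_mul, ← intervalIntegral.integral_const_mul]
        exact intervalIntegral.integral_congr fun x _ => by ring
      have iM : (∫ x in (0:ℝ)..L, (2 * (pdt p x t * (a x * deriv b t)))) = deriv b t * (2 * (∫ x in (0:ℝ)..L, pdt p x t * a x)) := by
        rw [← intervalIntegral.integral_const_mul, ← intervalIntegral.integral_const_mul]
        exact intervalIntegral.integral_congr fun x _ => by ring
      have iC1 : (∫ x in (0:ℝ)..L, (μ * h * pdt p x t) * a x) = μ * h * (∫ x in (0:ℝ)..L, pdt p x t * a x) := by
        rw [← intervalIntegral.integral_const_mul]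
        exact intervalIntegral.integral_congr fun x _ => by ring
      have iC2 : (∫ x in (0:ℝ)..L, (h * γ3 * β3 * (pdx v x t + (pdx w x t) ^ 2 / 2) - h * β3 * pdx p x t) * deriv a x) = (-h) * (∫ x in (0:ℝ)..L, (β3 * pdx p x t - γ3 * β3 * (pdx v x t + (pdx w x t) ^ 2 / 2)) * deriv a x) := by
        rw [← intervalIntegral.integral_const_mul]
        exact intervalIntegral.integral_congr fun x _ => by ring
      rw [iK, iP, iM, iC1, iC2]
      ring
    rw [← heq]
    exact hC1
  have HWC : ∀ a b : ℝ → ℝ, ContDiff ℝ (⊤ : ℕ∞) a → ContDiff ℝ (⊤ : ℕ∞) b → a 0 = 0 →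
      deriv a 0 = 0 → b 0 = 0 → b T = 0 → (∫ t in (0:ℝ)..T, (deriv b t * (∫ x in (0:ℝ)..L, ((ρ * h ^ 3 / 12) * pdt (pdx w) x t) * deriv a x) + (deriv b t * (∫ x in (0:ℝ)..L, (ρ * h * pdt w x t) * a x) + b t * ((∫ x in (0:ℝ)..L, ((-(α1 * h) * (pdx v x t + (pdx w x t) ^ 2 / 2) + γ3 * β3 * h * pdx p x t) * pdx w x t) * deriv a x) + ((∫ x in (0:ℝ)..L, (-(α1 * h ^ 3 / 12) * pdx (pdx w) x t) * deriv (deriv a) x) + (g t * a L - m t * deriv a L)))))) = 0 := by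
    intro a b ha hb ha0 hda0 hb0 hbT
    have hφ := EB.contDiff_prod ha hb
    have hfv := EB.firstVariation L T h ρ α1 γ3 β3 μ V g1 g m v w p
      (fun x t => (0:ℝ)) (fun x t => a x * b t) (fun x t => (0:ℝ))
      hv hw hp EB.contDiff_zero2 hφ EB.contDiff_zero2 hV hg1 hg hm
    have hd := hvar (fun x t => (0:ℝ)) (fun x t => a x * b t) (fun x t => (0:ℝ))
      EB.contDiff_zero2 hφ EB.contDiff_zero2
      (fun x => ⟨rfl, rfl, by simp [hb0], by simp [hbT], rfl, rfl⟩)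
      (fun t => ⟨rfl, by simp [ha0], by simp [EB.pdx_prod ha, hda0], rfl⟩)
    have hC1 := hfv.deriv.symm.trans hd
    have heq : (∫ t in (0:ℝ)..T, ((ρ * h / 2) * (∫ x in (0:ℝ)..L, (2 * (pdt v x t * pdt (fun x t => (0:ℝ)) x t + h ^ 2 / 12 * (pdt (pdx w) x t * pdt (pdx (fun x t => a x * b t)) x t) + pdt w x t * pdt (fun x t => a x * b t) x t))) - (h / 2) * (∫ x in (0:ℝ)..L, (2 * (α1 * ((pdx v x t + (pdx w x t) ^ 2 / 2) * (pdx (fun x t => (0:ℝ)) x t + pdx w x t * pdx (fun x t => a x * b t) x t) + h ^ 2 / 12 * (pdx (pdx w) x t * pdx (pdx (fun x t => a x * b t)) x t)) - γ3 * β3 * ((pdx (fun x t => (0:ℝ)) x t + pdx w x t * pdx (fun x t => a x * b t) x t) * pdx p x t + (pdx v x t + (pdx w x t) ^ 2 / 2) * pdx (fun x t => (0:ℝ)) x t) + β3 * (pdx p x t * pdx (fun x t => (0:ℝ)) x t)))) + (μ * h / 2) * (∫ x in (0:ℝ)..L, (2 * (pdt p x t * pdt (fun x t => (0:ℝ)) x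 t))) - V t * 0 + g1 t * 0 + g t * (a L * b t) - m t * pdx (fun x t => a x * b t) L t)) = (∫ t in (0:ℝ)..T, (deriv b t * (∫ x in (0:ℝ)..L, ((ρ * h ^ 3 / 12) * pdt (pdx w) x t) * deriv a x) + (deriv b t * (∫ x in (0:ℝ)..L, (ρ * h * pdt w x t) * a x) + b t * ((∫ x in (0:ℝ)..L, ((-(α1 * h) * (pdx v x t + (pdx w x t) ^ 2 / 2) + γ3 * β3 * h * pdx p x t) * pdx w x t) * deriv a x) + ((∫ x in (0:ℝ)..L, (-(α1 * h ^ 3 / 12) * pdx (pdx w) x t) * deriv (deriv a) x) + (g t * a L - m t * deriv a L)))))) := by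
      refine intervalIntegral.integral_congr fun t _ => ?_
      simp only [EB.pdt_prod (hb.differentiable (by simp)), EB.pdx_prod ha,
        EB.pdx_prod (EB.contDiff_deriv ha), EB.pdx_zero, EB.pdt_zero]
      have cwxt : Continuous (uncurry (pdt (pdx w))) := (contDiff_pdt (contDiff_pdx hw)).continuous
      have cwt : Continuous (uncurry (pdt w)) := (contDiff_pdt hw).continuous
      have cvx : Continuous (uncurry (pdx v)) := (contDiff_pdx hv).continuous
      have cwx : Continuous (uncurry (pdx w)) := (contDiff_pdx hw).continuous
      have cpx : Continuous (uncurry (pdx p)) := (contDiff_pdx hp).continuous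
      have cw2 : Continuous (uncurry (pdx (pdx w))) := (contDiff_pdx (contDiff_pdx hw)).continuous
      have hac : Continuous a := ha.continuous
      have hdac : Continuous (deriv a) := (EB.contDiff_deriv ha).continuous
      have hddac : Continuous (deriv (deriv a)) := (EB.contDiff_deriv (EB.contDiff_deriv ha)).continuous
      have iK : (∫ x in (0:ℝ)..L, (2 * (pdt v x t * 0 + h ^ 2 / 12 * (pdt (pdx w) x t * (deriv a x * deriv b t)) + pdt w x t * (a x * deriv b t)))) = deriv b t * ((2 * (h ^ 2 / 12)) * (∫ x in (0:ℝ)..L, pdt (pdx w) x t * deriv a x))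
          + deriv b t * (2 * (∫ x in (0:ℝ)..L, pdt w x t * a x)) := by
        rw [show deriv b t * ((2 * (h ^ 2 / 12)) * (∫ x in (0:ℝ)..L, pdt (pdx w) x t * deriv a x)) + deriv b t * (2 * (∫ x in (0:ℝ)..L, pdt w x t * a x))
            = (deriv b t * (2 * (h ^ 2 / 12))) * (∫ x in (0:ℝ)..L, pdt (pdx w) x t * deriv a x) + (deriv b t * 2) * (∫ x in (0:ℝ)..L, pdt w x t * a x) from by ring,
          ← intervalIntegral.integral_const_mul, ← intervalIntegral.integral_const_mul,
          ← intervalIntegral.integral_add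
            ((by fun_prop : Continuous fun x => (deriv b t * (2 * (h ^ 2 / 12))) * (pdt (pdx w) x t * deriv a x)).intervalIntegrable 0 L)
            ((by fun_prop : Continuous fun x => (deriv b t * 2) * (pdt w x t * a x)).intervalIntegrable 0 L)]
        exact intervalIntegral.integral_congr fun x _ => by ring
      have iP : (∫ x in (0:ℝ)..L, (2 * (α1 * ((pdx v x t + (pdx w x t) ^ 2 / 2) * (0 + pdx w x t * (deriv a x * b t)) + h ^ 2 / 12 * (pdx (pdx w) x t * (deriv (deriv a) x * b t))) - γ3 * β3 * ((0 + pdx w x t * (deriv a x * b t)) * pdx p x t + (pdx v x t + (pdx w x t) ^ 2 / 2) * 0) + β3 * (pdx p x t * 0)))) = b t * (2 * (∫ x in (0:ℝ)..L, ((α1 * (pdx v x t + (pdx w x t) ^ 2 / 2) - γ3 * β3 * pdx p x t) * pdx w x t) * deriv a x))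
          + b t * ((2 * α1 * (h ^ 2 / 12)) * (∫ x in (0:ℝ)..L, pdx (pdx w) x t * deriv (deriv a) x)) := by
        rw [show b t * (2 * (∫ x in (0:ℝ)..L, ((α1 * (pdx v x t + (pdx w x t) ^ 2 / 2) - γ3 * β3 * pdx p x t) * pdx w x t) * deriv a x)) + b t * ((2 * α1 * (h ^ 2 / 12)) * (∫ x in (0:ℝ)..L, pdx (pdx w) x t * deriv (deriv a) x))
            = (b t * 2) * (∫ x in (0:ℝ)..L, ((α1 * (pdx v x t + (pdx w x t) ^ 2 / 2) - γ3 * β3 * pdx p x t) * pdx w x t) * deriv a x) + (b t * (2 * α1 * (h ^ 2 / 12))) * (∫ x in (0:ℝ)..L, pdx (pdx w) x t * deriv (deriv a) x) from by ring,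
          ← intervalIntegral.integral_const_mul, ← intervalIntegral.integral_const_mul,
          ← intervalIntegral.integral_add
            ((by fun_prop : Continuous fun x => (b t * 2) * (((α1 * (pdx v x t + (pdx w x t) ^ 2 / 2) - γ3 * β3 * pdx p x t) * pdx w x t) * deriv a x)).intervalIntegrable 0 L)
            ((by fun_prop : Continuous fun x => (b t * (2 * α1 * (h ^ 2 / 12))) * (pdx (pdx w) x t * deriv (deriv a) x)).intervalIntegrable 0 L)]
        exact intervalIntegral.integral_congr fun x _ => by ring
      have iM : (∫ x in (0:ℝ)..L, (2 * (pdt p x t * 0))) = 0 := by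
        rw [intervalIntegral.integral_congr (g := fun _ => (0:ℝ)) fun x _ => by ring,
          intervalIntegral.integral_zero]
      have iC1 : (∫ x in (0:ℝ)..L, ((ρ * h ^ 3 / 12) * pdt (pdx w) x t) * deriv a x) = (ρ * h ^ 3 / 12) * (∫ x in (0:ℝ)..L, pdt (pdx w) x t * deriv a x) := by
        rw [← intervalIntegral.integral_const_mul]
        exact intervalIntegral.integral_congr fun x _ => by ring
      have iC2 : (∫ x in (0:ℝ)..L, (ρ * h * pdt w x t) * a x) = (ρ * h) * (∫ x in (0:ℝ)..L, pdt w x t * a x) := by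
        rw [← intervalIntegral.integral_const_mul]
        exact intervalIntegral.integral_congr fun x _ => by ring
      have iC3 : (∫ x in (0:ℝ)..L, ((-(α1 * h) * (pdx v x t + (pdx w x t) ^ 2 / 2) + γ3 * β3 * h * pdx p x t) * pdx w x t) * deriv a x) = (-h) * (∫ x in (0:ℝ)..L, ((α1 * (pdx v x t + (pdx w x t) ^ 2 / 2) - γ3 * β3 * pdx p x t) * pdx w x t) * deriv a x) := by
        rw [← intervalIntegral.integral_const_mul]
        exact intervalIntegral.integral_congr fun x _ => by ring
      have iC4 : (∫ x in (0:ℝ)..L, (-(α1 * h ^ 3 / 12) * pdx (pdx w) x t) * deriv (deriv a) x) = (-(α1 * h ^ 3 / 12)) * (∫ x in (0:ℝ)..L, pdx (pdx w) x t * deriv (deriv a) x) := by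
        rw [← intervalIntegral.integral_const_mul]
        exact intervalIntegral.integral_congr fun x _ => by ring
      rw [iK, iP, iM, iC1, iC2, iC3, iC4]
      ring
    rw [← heq]
    exact hC1
  have resA := EB.caseA L T h ρ α1 γ3 β3 hL hT v w p g1 hv hw hp hg1 HWA
  have resB := EB.caseB L T h μ α1 γ3 β3 hL hT v w p V hv hw hp hV HWB
  have resC := EB.caseC L T h ρ α1 γ3 β3 hL hT v w p g m hv hw hp hg hm HWC
  exact ⟨resA.1, resB.1, resC.1, resC.2.1, resA.2, resB.2, resC.2.2⟩
end
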